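/- arXiv:1511.03909 — 7 statements merged into one kernel-verified Lean document; each statement's English description precedes it below -/
import Mathlib

section
/- Let N > 1 be an odd integer, let b be a real constant with |b| < 2, let c = 1, and set θ = arccos(−b/2). Suppose Nθ = 2πρ for some positive integer ρ. Let g : ℕ × ℝ → ℝ be continuous in its second variable and N-periodic in its first variable, and suppose: (C1) there exists K > 0 with |g(t,x)| ≤ K for all t ∈ ℕ and x ∈ ℝ; (C2) there exist constants ẑ and J > 0 such that for every real x with x ≥ ẑ and every t ∈ ℕ, g(t,−x) ≤ −J < 0 < J ≤ g(t,x); (C3) N/gcd(ρ,N) ≥ max{3, K/J + 1}. Then there exists an N-periodic function y : ℕ → ℝ (y(t+N) = y(t) for all t) satisfying y(t+2) + b·y(t+1) + y(t) = g(t, y(t)) for all t ∈ ℕ. -/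
/-!
Let `e = exp (θ i)`, a root of `X² + b X + 1` with `e ^ N = 1`. For every `v : ℂ` the complex
first-order recursion `a (t + 1) = e a t + (e - ē)⁻¹ g(t, 2 re (a t))`, `a 0 = v`, yields a solution
`y = 2 re a` of the second-order equation, and this solution is `N`-periodic as soon as
`S v = ∑_{t<N} ēᵗ g(t, y t)` vanishes.

For `|v| = R` large, `y t` stays within a bounded distance of `2 re (eᵗ v) = 2R cos (θt + arg v)`,
so by (C2) every term of `re (v̄ S v) = ∑_{t<N} re (eᵗ v) g(t, y t)` is positive unless
`cos (θt + arg v)` is small. Since `N` is odd and `θ = 2πρ/N`, at most `gcd(ρ, N)` of the angles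
`θt + arg v` come close to `π/2 + πℤ`, and the good terms win: `re (v̄ S v) > 0` on the circle
`|v| = R`. Then `S` has a zero in the disc: otherwise a continuous logarithm of `S` on the disc,
together with the continuous logarithm of `S v / v` (a function with positive real part) on the
boundary, would give a continuous logarithm of `v` on the circle.
-/

open Complex ComplexConjugate Metric
open scoped Real

theorem Continuous.add_two_pi_mul_I_of_exp_eq_exp_mul_I {ψ : ℝ → ℂ} (hψ : Continuous ψ)
    (h : ∀ x : ℝ, exp (ψ x) = exp (x * I)) : ψ (2 * π) = ψ 0 + 2 * π * I := by
  have hconst := isCoveringMap_exp.const_of_comp (g := fun x : ℝ ↦ ψ x - x * I) (by fun_prop)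
    (fun x x' ↦ by ext; simp only [exp_sub, h, div_self (exp_ne_zero _)]) (2 * π) 0
  push_cast at hconst
  linear_combination hconst

theorem exists_mem_closedBall_eq_zero_of_re_conj_mul_pos {T : ℂ → ℂ} {R : ℝ} (hR : 0 < R)
    (hT : ContinuousOn T (closedBall 0 R)) (h : ∀ v, ‖v‖ = R → 0 < (conj v * T v).re) :
    ∃ v ∈ closedBall (0 : ℂ) R, T v = 0 := by
  by_contra! hne
  have h0 : (0 : ℂ) ∈ closedBall 0 R := by simp [hR.le]
  have : SimplyConnectedSpace (closedBall (0 : ℂ) R) :=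
    have := (convex_closedBall (0 : ℂ) R).contractibleSpace ⟨0, h0⟩
    inferInstance
  have := (convex_closedBall (0 : ℂ) R).locallyPathConnectedSpace
  obtain ⟨F, -, hF⟩ := (isCoveringMapOn_exp.existsUnique_continuousMap_lifts
    ⟨(closedBall 0 R).domRestrict T, hT.domRestrict⟩ (a₀ := ⟨0, h0⟩)
    (exp_log (hne 0 h0)) fun v ↦ hne v v.2).exists
  have hq (v : ℂ) (hv : ‖v‖ = R) : T v / v ∈ slitPlane := by
    have hv0 : v ≠ 0 := norm_ne_zero_iff.mp (hv ▸ hR.ne')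
    have hTv : conj v * T v = (R ^ 2 : ℝ) * (T v / v) := by
      rw [← hv, ofReal_pow, ← conj_mul']
      field_simp
    have := h v hv
    rw [hTv, re_ofReal_mul] at this
    exact Or.inl (pos_of_mul_pos_right this (by positivity))
  let γ (x : ℝ) : closedBall (0 : ℂ) R := ⟨R * exp (x * I), by simp [abs_of_pos hR]⟩
  have hγ : Continuous γ := by fun_prop
  have hγR (x : ℝ) : ‖(γ x : ℂ)‖ = R := by simp [γ, abs_of_pos hR]
  have hγ0 (x : ℝ) : (γ x : ℂ) ≠ 0 := norm_ne_zero_iff.mp ((hγR x).symm ▸ hR.ne')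
  have hlog : Continuous fun x ↦ log (T (γ x) / γ x) := by
    have hTγ : Continuous fun x ↦ T (γ x) :=
      hT.comp_continuous (continuous_subtype_val.comp hγ) fun x ↦ (γ x).2
    exact continuous_iff_continuousAt.mpr fun x ↦
      (hTγ.div (continuous_subtype_val.comp hγ) hγ0).continuousAt.clog (hq _ (hγR x))
  -- `F` is a logarithm of `T` and `T v / v` has one on the circle, so `v` would have one too
  have hψ := Continuous.add_two_pi_mul_I_of_exp_eq_exp_mul_I
    (ψ := fun x ↦ F (γ x) - log (T (γ x) / γ x) - Real.log R)
    (((F.continuous.comp hγ).sub hlog).sub continuous_const) fun x ↦ by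
      have hFx : exp (F (γ x)) = T (γ x) := congrFun hF (γ x)
      have hTx : T (γ x) ≠ 0 := hne _ (γ x).2
      rw [exp_sub, exp_sub, hFx, exp_log (slitPlane_ne_zero (hq _ (hγR x))),
        ← ofReal_exp, Real.exp_log hR]
      field_simp [hγ0 x, hR.ne']
      rfl
  have hγ2π : γ (2 * π) = γ 0 := by
    ext; simp [γ, exp_two_pi_mul_I]
  simp only [hγ2π] at hψ
  simp [Real.pi_ne_zero, I_ne_zero] at hψ

theorem Real.exists_int_abs_sub_lt_of_abs_cos_lt_sin {x ε : ℝ} (hε₀ : 0 ≤ ε) (hε : ε ≤ π / 2)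
    (h : |Real.cos x| < Real.sin ε) : ∃ q : ℤ, |x - (π / 2 + q * π)| < ε := by
  set q := round ((x - π / 2) / π)
  set δ := x - (π / 2 + q * π)
  have hδ : |δ| ≤ π / 2 := by
    have := abs_sub_round ((x - π / 2) / π)
    rw [← mul_le_mul_iff_of_pos_right pi_pos, ← abs_of_pos pi_pos, ← abs_mul,
      abs_of_pos pi_pos, sub_mul, div_mul_cancel₀ _ pi_ne_zero] at this
    rw [show δ = x - π / 2 - q * π by ring]
    linarith
  have hcos : |Real.cos x| = Real.sin |δ| := by
    rw [show x = δ + π / 2 + q * π by ring, cos_add_int_mul_pi, cos_add_pi_div_two, abs_mul,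
      abs_neg, abs_sin_eq_sin_abs_of_abs_le_pi (by linarith [pi_pos]), abs_zpow, abs_neg,
      abs_one, one_zpow, one_mul]
  refine ⟨q, lt_of_not_ge fun hεδ ↦ h.not_ge ?_⟩
  rw [hcos]
  exact sin_le_sin_of_le_of_le_pi_div_two (by linarith [pi_pos]) hδ hεδ

theorem modEq_of_abs_cos_lt {N ρ : ℕ} (hN : Odd N) {θ φ : ℝ} (hres : N * θ = 2 * π * ρ)
    {t₁ t₂ : ℕ} (h₁ : |Real.cos (θ * t₁ + φ)| < Real.sin (π * ρ.gcd N / (2 * N)))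
    (h₂ : |Real.cos (θ * t₂ + φ)| < Real.sin (π * ρ.gcd N / (2 * N))) :
    t₁ ≡ t₂ [MOD N / ρ.gcd N] := by
  obtain ⟨ρ', N', hcop, hρ, hNd⟩ := Nat.exists_coprime ρ N
  have hd0 : 0 < ρ.gcd N := Nat.gcd_pos_of_pos_right ρ hN.pos
  have hN' : Odd N' := hN.of_dvd_nat ⟨_, hNd⟩
  generalize ρ.gcd N = d at hρ hNd hd0 h₁ h₂ ⊢
  subst hρ hNd
  have hN'0 : (0 : ℝ) < N' := by exact_mod_cast hN'.pos
  have hε : π * d / (2 * (N' * d : ℕ)) = π / (2 * N') := by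
    push_cast; field_simp
  have hθ : N' * θ = 2 * π * ρ' := by
    push_cast at hres
    exact mul_right_cancel₀ (by positivity : (d : ℝ) ≠ 0) (by linarith)
  rw [hε] at h₁ h₂
  have hεle : π / (2 * N') ≤ π / 2 := by
    gcongr; linarith [show (1 : ℝ) ≤ N' by exact_mod_cast hN'.pos]
  obtain ⟨q₁, hq₁⟩ := Real.exists_int_abs_sub_lt_of_abs_cos_lt_sin (by positivity) hεle h₁
  obtain ⟨q₂, hq₂⟩ := Real.exists_int_abs_sub_lt_of_abs_cos_lt_sin (by positivity) hεle h₂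
  -- `θ (t₁ - t₂) - π (q₁ - q₂) = π m / N'`, and it has absolute value `< π / N'`
  set m : ℤ := 2 * ρ' * (t₁ - t₂) - N' * (q₁ - q₂)
  have hm : |(m : ℝ)| < 1 := by
    have hdiff : (N' : ℝ) * (θ * t₁ + φ - (π / 2 + q₁ * π) - (θ * t₂ + φ - (π / 2 + q₂ * π))) =
        π * m := by
      simp only [m]; push_cast; linear_combination (t₁ - t₂ : ℝ) * hθ
    have hsum : (N' : ℝ) * (π / (2 * N') + π / (2 * N')) = π * 1 := by field_simp; ring
    have : |π * m| < π * 1 := by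
      rw [← hdiff, abs_mul, abs_of_pos hN'0, ← hsum]
      exact mul_lt_mul_of_pos_left ((abs_sub _ _).trans_lt (add_lt_add hq₁ hq₂)) hN'0
    rw [abs_mul, abs_of_pos Real.pi_pos] at this
    exact lt_of_mul_lt_mul_left this Real.pi_pos.le
  have hdvd : (N' : ℤ) ∣ 2 * ρ' * (t₁ - t₂) :=
    ⟨q₁ - q₂, by linarith [Int.abs_lt_one_iff.mp (by exact_mod_cast hm : |m| < 1)]⟩
  rw [Nat.mul_div_cancel _ hd0, Nat.modEq_iff_dvd, dvd_sub_comm]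
  refine (Nat.isCoprime_iff_coprime.mpr ?_).dvd_of_dvd_mul_left (by exact_mod_cast hdvd)
  exact Nat.Coprime.mul_right hN'.coprime_two_right hcop.symm

theorem Finset.card_le_div_of_modEq {s : Finset ℕ} {N m : ℕ} (hs : s ⊆ Finset.range N)
    (hm : m ∣ N) (hmod : ∀ a ∈ s, ∀ b ∈ s, a ≡ b [MOD m]) : s.card ≤ N / m := by
  simpa using Finset.card_le_card_of_injOn (· / m) (t := Finset.range (N / m))
    (fun a ha ↦ by simpa using Nat.div_lt_div_of_lt_of_dvd hm (Finset.mem_range.mp (hs ha)))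
    fun a ha b hb hab ↦ by
      rw [← Nat.div_add_mod a m, ← Nat.div_add_mod b m]
      simp only at hab
      rw [hab, hmod a ha b hb]

theorem card_filter_abs_cos_lt_le {N ρ : ℕ} (hN : Odd N) {θ : ℝ} (hres : N * θ = 2 * π * ρ)
    (φ : ℝ) : ((Finset.range N).filter fun t : ℕ ↦
      |Real.cos (θ * t + φ)| < Real.sin (π * ρ.gcd N / (2 * N))).card ≤ ρ.gcd N := by
  have hdvd := Nat.gcd_dvd_right ρ N
  convert Finset.card_le_div_of_modEq (Finset.filter_subset _ _) (Nat.div_dvd_of_dvd hdvd)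
    fun a ha b hb ↦ modEq_of_abs_cos_lt hN hres (Finset.mem_filter.1 ha).2
      (Finset.mem_filter.1 hb).2
  exact (Nat.div_div_self hdvd hN.pos.ne').symm

theorem Finset.sum_pos_of_card_filter_le {ι : Type*} {s : Finset ι} {P : ι → Prop}
    [DecidablePred P] {f : ι → ℝ} {a m : ℝ} {d : ℕ} (hbig : ∀ i ∈ s, ¬P i → a ≤ f i)
    (hsmall : ∀ i ∈ s, -m ≤ f i) (hcard : (s.filter P).card ≤ d) (ham : 0 ≤ a + m)
    (h : d * m < (s.card - d) * a) : 0 < ∑ i ∈ s, f i := by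
  rw [← Finset.sum_filter_add_sum_filter_not s P]
  have hP := Finset.card_nsmul_le_sum (s.filter P) f (-m)
    fun i hi ↦ hsmall i (Finset.mem_filter.1 hi).1
  have hnP := Finset.card_nsmul_le_sum (s.filter (¬P ·)) f a
    fun i hi ↦ hbig i (Finset.mem_filter.1 hi).1 (Finset.mem_filter.1 hi).2
  have hs : ((s.filter P).card : ℝ) + (s.filter (¬P ·)).card = s.card := by
    exact_mod_cast Finset.card_filter_add_card_filter_not P
  have hcard' : ((s.filter P).card : ℝ) ≤ d := by exact_mod_cast hcard
  rw [nsmul_eq_mul, eq_sub_of_add_eq' hs] at hnP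
  rw [nsmul_eq_mul] at hP
  nlinarith [mul_le_mul_of_nonneg_right hcard' ham]

theorem abs_mul_le_mul_apply {G : ℝ → ℝ} {z J D p y : ℝ}
    (hG : ∀ x, z ≤ x → G (-x) ≤ -J ∧ J ≤ G x) (hy : |y - 2 * p| ≤ D) (hp : D + z ≤ 2 * |p|) :
    |p| * J ≤ p * G y := by
  obtain ⟨hy₁, hy₂⟩ := abs_le.mp hy
  rcases le_or_gt 0 p with hp0 | hp0
  · rw [abs_of_nonneg hp0] at hp ⊢
    exact mul_le_mul_of_nonneg_left (hG y (by linarith)).2 hp0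
  · rw [abs_of_neg hp0] at hp ⊢
    have := (hG (-y) (by linarith)).1
    rw [neg_neg] at this
    nlinarith

theorem neg_mul_le_mul_apply {G : ℝ → ℝ} {z J K D p y r : ℝ}
    (hG : ∀ x, z ≤ x → G (-x) ≤ -J ∧ J ≤ G x) (hK : ∀ x, |G x| ≤ K) (hJ : 0 ≤ J)
    (hy : |y - 2 * p| ≤ D) (hr : D + z ≤ 2 * r) (hr₀ : 0 ≤ r) : -(r * K) ≤ p * G y := by
  have hK₀ : 0 ≤ K := (abs_nonneg _).trans (hK 0)
  rcases le_or_gt r |p| with hrp | hrp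
  · have := abs_mul_le_mul_apply hG hy (by linarith)
    nlinarith [abs_nonneg p]
  · have := neg_abs_le (p * G y)
    rw [abs_mul] at this
    nlinarith [hK y, abs_nonneg p]

theorem re_exp_mul_I_pow_mul (θ : ℝ) (t : ℕ) (v : ℂ) :
    (exp (θ * I) ^ t * v).re = ‖v‖ * Real.cos (θ * t + arg v) := by
  conv_lhs => rw [← norm_mul_exp_arg_mul_I v, ← exp_nat_mul, mul_left_comm, ← exp_add]
  rw [show (t : ℂ) * (θ * I) + arg v * I = ((θ * t + arg v : ℝ) : ℂ) * I by push_cast; ring,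
    re_ofReal_mul, exp_ofReal_mul_I_re]

theorem Nat.pos_and_two_mul_lt_of_mul_eq_two_pi_mul {N ρ : ℕ} (hN : 0 < N) {θ : ℝ}
    (hθ₀ : 0 < θ) (hθπ : θ < π) (hres : N * θ = 2 * π * ρ) : 0 < ρ ∧ 2 * ρ < N := by
  have hN₀ : (0 : ℝ) < N := by exact_mod_cast hN
  have hρ : (0 : ℝ) < ρ := by nlinarith [Real.pi_pos]
  have hρN : (2 * ρ : ℝ) < N := by nlinarith [Real.pi_pos]
  exact ⟨by exact_mod_cast hρ, by exact_mod_cast hρN⟩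

theorem exists_pos_le_mul_lt {s A B : ℝ} (hs : 0 < s) (hA : 0 < A) (hB : 0 ≤ B) :
    ∃ μ, 0 < μ ∧ μ ≤ s ∧ μ * B < s * A := by
  refine ⟨s * A / (A + B), by positivity, ?_, ?_⟩
  · rw [div_le_iff₀ (by positivity)]; nlinarith [mul_nonneg hs.le hB]
  · rw [div_mul_eq_mul_div, div_lt_iff₀ (by positivity)]; nlinarith [mul_pos (mul_pos hs hA) hA]

theorem exists_radius_forall_norm_eq_sum_pos {N ρ : ℕ} (hN : Odd N) {θ : ℝ} (hθ₀ : 0 < θ)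
    (hθπ : θ < π) (hres : N * θ = 2 * π * ρ) {g : ℕ → ℝ → ℝ} {K J z D : ℝ}
    (hK : ∀ t x, |g t x| ≤ K) (hJ : 0 < J) (hg : ∀ x, z ≤ x → ∀ t, g t (-x) ≤ -J ∧ J ≤ g t x)
    (y : ℂ → ℕ → ℝ) (hy : ∀ v, ∀ t < N, |y v t - 2 * (exp (θ * I) ^ t * v).re| ≤ D) :
    ∃ R > 0, ∀ v : ℂ, ‖v‖ = R →
      0 < ∑ t ∈ Finset.range N, (exp (θ * I) ^ t * v).re * g t (y v t) := by
  set d := ρ.gcd N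
  have hN₀ : (0 : ℝ) < N := by exact_mod_cast hN.pos
  obtain ⟨hρ, hρN⟩ := Nat.pos_and_two_mul_lt_of_mul_eq_two_pi_mul hN.pos hθ₀ hθπ hres
  have hdN : (d : ℝ) < N := by exact_mod_cast (Nat.gcd_le_left N hρ).trans_lt (by omega)
  have hd₀ : (0 : ℝ) < d := by exact_mod_cast Nat.gcd_pos_of_pos_left N hρ
  set s := Real.sin (π * d / (2 * N))
  have hs : 0 < s := Real.sin_pos_of_pos_of_lt_pi (by positivity) (by
    rw [div_lt_iff₀ (by positivity)]; nlinarith [Real.pi_pos])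
  have hK₀ : 0 ≤ K := (abs_nonneg _).trans (hK 0 0)
  have hD₀ : 0 ≤ D := (abs_nonneg _).trans (hy 0 0 hN.pos)
  -- `μ R` is the threshold above which `|re (eᵗ v)|` forces the sign of `g`
  obtain ⟨μ, hμ₀, hμs, hμK⟩ := exists_pos_le_mul_lt hs
    (mul_pos (sub_pos.mpr hdN) hJ) (mul_nonneg hd₀.le hK₀)
  set R := (D + |z| + 1) / (2 * μ)
  have hR : 0 < R := by positivity
  have hDR : D + z ≤ 2 * μ * R := by
    rw [mul_div_cancel₀ _ (by positivity)]; linarith [le_abs_self z]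
  refine ⟨R, hR, fun v hv ↦ ?_⟩
  refine Finset.sum_pos_of_card_filter_le (P := fun t ↦ |(exp (θ * I) ^ t * v).re| < s * R)
    (a := s * R * J) (m := μ * R * K) (d := d) (fun t ht hbig ↦ ?_) (fun t ht ↦ ?_) ?_
    (by positivity) ?_
  · have hp := abs_mul_le_mul_apply (hg · · t) (hy v t (Finset.mem_range.mp ht))
      (p := (exp (θ * I) ^ t * v).re) (by nlinarith)
    nlinarith
  · exact neg_mul_le_mul_apply (hg · · t) (hK t) hJ.le (hy v t (Finset.mem_range.mp ht))
      (by linarith) (by positivity)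
  · calc _ = ((Finset.range N).filter fun t : ℕ ↦ |Real.cos (θ * t + arg v)| < s).card := by
          congr 1
          refine Finset.filter_congr fun t _ ↦ ?_
          rw [re_exp_mul_I_pow_mul, hv, abs_mul, abs_of_pos hR, mul_comm s,
            mul_lt_mul_iff_of_pos_left hR]
      _ ≤ d := card_filter_abs_cos_lt_le hN hres (arg v)
  · rw [Finset.card_range]
    nlinarith [mul_lt_mul_of_pos_right hμK hR]

/-- The coefficient `(e - ē)⁻¹` is purely imaginary with `re (e (e - ē)⁻¹) = 1 / 2`, which makes
`2 re a` a solution of `y (t + 2) + b y (t + 1) + y t = g t (y t)` when `e` is a non-real root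
of `X ^ 2 + b X + 1`. -/
noncomputable def complexOrbit (e : ℂ) (g : ℕ → ℝ → ℝ) (v : ℂ) : ℕ → ℂ
  | 0 => v
  | t + 1 => e * complexOrbit e g v t + (e - conj e)⁻¹ * g t (2 * (complexOrbit e g v t).re)

namespace complexOrbit

variable {e : ℂ} {g : ℕ → ℝ → ℝ}

theorem succ (v : ℂ) (t : ℕ) : complexOrbit e g v (t + 1) =
    e * complexOrbit e g v t + (e - conj e)⁻¹ * g t (2 * (complexOrbit e g v t).re) := rfl

theorem recurrence_two_mul_re {b : ℝ} (hb : e ^ 2 + b * e + 1 = 0) (him : e.im ≠ 0) (v : ℂ)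
    (t : ℕ) :
    2 * (complexOrbit e g v (t + 2)).re + b * (2 * (complexOrbit e g v (t + 1)).re) +
      2 * (complexOrbit e g v t).re = g t (2 * (complexOrbit e g v t).re) := by
  have hc : (e - conj e)⁻¹ = ((-(2 * e.im)⁻¹ : ℝ) : ℂ) * I := by
    rw [sub_conj, mul_inv, inv_I]; push_cast; ring
  have hre (r : ℝ) : ((e - conj e)⁻¹ * r).re = 0 := by simp [hc]
  have hre' (r : ℝ) : (e * ((e - conj e)⁻¹ * r)).re = r / 2 := by
    rw [hc, show e * (((-(2 * e.im)⁻¹ : ℝ) : ℂ) * I * r) = ((-(2 * e.im)⁻¹ * r : ℝ) : ℂ) * (e * I)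
      by push_cast; ring, re_ofReal_mul, mul_I_re]
    field_simp
  have h1 : (complexOrbit e g v (t + 1)).re = (e * complexOrbit e g v t).re := by
    rw [succ, add_re, hre, add_zero]
  have h2 : (complexOrbit e g v (t + 2)).re =
      (e ^ 2 * complexOrbit e g v t).re + g t (2 * (complexOrbit e g v t).re) / 2 := by
    rw [succ, add_re, hre, add_zero, succ, mul_add, add_re, hre', ← mul_assoc, ← pow_two]
  have hroot := congrArg (fun z ↦ (z * complexOrbit e g v t).re) hb
  simp only [add_mul, add_re, mul_assoc, re_ofReal_mul, one_mul, zero_mul, zero_re] at hroot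
  rw [h1, h2]
  linarith

theorem continuous (hg : ∀ t, Continuous (g t)) (t : ℕ) :
    Continuous fun v ↦ complexOrbit e g v t := by
  induction t with
  | zero => exact continuous_id
  | succ t ih =>
    simp only [succ]
    have := hg t
    fun_prop

theorem norm_sub_pow_mul_le (he : ‖e‖ = 1) {K : ℝ} (hK : ∀ t x, |g t x| ≤ K) (v : ℂ) (t : ℕ) :
    ‖complexOrbit e g v t - e ^ t * v‖ ≤ t * (‖(e - conj e)⁻¹‖ * K) := by
  induction t with
  | zero => simp [complexOrbit]
  | succ t ih =>
    calc ‖complexOrbit e g v (t + 1) - e ^ (t + 1) * v‖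
        = ‖e * (complexOrbit e g v t - e ^ t * v) +
            (e - conj e)⁻¹ * g t (2 * (complexOrbit e g v t).re)‖ := by rw [succ]; ring_nf
      _ ≤ t * (‖(e - conj e)⁻¹‖ * K) + ‖(e - conj e)⁻¹‖ * K := by
        grw [norm_add_le, norm_mul, norm_mul, he, one_mul, ih, norm_real, Real.norm_eq_abs, hK]
      _ = (t + 1 : ℕ) * (‖(e - conj e)⁻¹‖ * K) := by push_cast; ring

theorem eq_pow_mul (he : ‖e‖ = 1) (v : ℂ) (n : ℕ) :
    complexOrbit e g v n = e ^ n * (v + (e - conj e)⁻¹ * conj e *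
      ∑ t ∈ Finset.range n, conj e ^ t * g t (2 * (complexOrbit e g v t).re)) := by
  have hee : e * conj e = 1 := by rw [mul_conj', he]; norm_num
  induction n with
  | zero => simp [complexOrbit]
  | succ n ih =>
    have hpow : (e * conj e) ^ (n + 1) = 1 := by rw [hee, one_pow]
    rw [succ, Finset.sum_range_succ]
    generalize g n (2 * (complexOrbit e g v n).re) = G
    rw [ih]
    linear_combination -(e - conj e)⁻¹ * G * hpow

theorem add_period {N : ℕ} (hg : ∀ t x, g (t + N) x = g t x) {v : ℂ}
    (hv : complexOrbit e g v N = v) (t : ℕ) :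
    complexOrbit e g v (t + N) = complexOrbit e g v t := by
  induction t with
  | zero => rw [zero_add, hv]; rfl
  | succ t ih => rw [Nat.add_right_comm, succ, succ, ih, hg]

theorem exists_add_period_of_sum_pos {N : ℕ} (he : ‖e‖ = 1) (heN : e ^ N = 1)
    (hg : ∀ t, Continuous (g t)) (hgper : ∀ t x, g (t + N) x = g t x) {R : ℝ} (hR : 0 < R)
    (hpos : ∀ v : ℂ, ‖v‖ = R →
      0 < ∑ t ∈ Finset.range N, (e ^ t * v).re * g t (2 * (complexOrbit e g v t).re)) :
    ∃ v, ∀ t, complexOrbit e g v (t + N) = complexOrbit e g v t := by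
  obtain ⟨v, -, hv⟩ := exists_mem_closedBall_eq_zero_of_re_conj_mul_pos hR
    (T := fun v ↦ ∑ t ∈ Finset.range N, conj e ^ t * g t (2 * (complexOrbit e g v t).re))
    (by have := continuous hg (e := e); fun_prop) fun v hv ↦ by
      convert hpos v hv using 1
      rw [Finset.mul_sum, re_sum]
      refine Finset.sum_congr rfl fun t _ ↦ ?_
      rw [← mul_assoc, ← map_pow, ← map_mul, mul_comm v, mul_re, conj_re, conj_im, ofReal_re,
        ofReal_im, mul_zero, sub_zero]
  refine ⟨v, add_period hgper ?_⟩
  rw [eq_pow_mul he, heN, hv]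
  ring

end complexOrbit

theorem exp_mul_I_sq_add_mul_add_one {θ b : ℝ} (hθ : Real.cos θ = -b / 2) :
    exp (θ * I) ^ 2 + b * exp (θ * I) + 1 = 0 := by
  have hb : (b : ℂ) = -(exp (θ * I) + conj (exp (θ * I))) := by
    rw [add_conj, exp_ofReal_mul_I_re, hθ]; push_cast; ring
  have hnorm : exp (θ * I) * conj (exp (θ * I)) = 1 := by
    rw [mul_conj', norm_exp_ofReal_mul_I]; norm_num
  linear_combination exp (θ * I) * hb - hnorm

theorem exp_mul_I_pow_eq_one {θ : ℝ} {N ρ : ℕ} (hres : N * θ = 2 * π * ρ) :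
    exp (θ * I) ^ N = 1 := by
  rw [← exp_nat_mul, exp_eq_one_iff]
  exact ⟨ρ, by push_cast; linear_combination I * (by exact_mod_cast hres : (N * θ : ℂ) = 2 * π * ρ)⟩

theorem periodic_solution_dim_two_general
    (N : ℕ) (hNodd : Odd N)
    (b : ℝ) (hb : |b| < 2)
    (θ : ℝ) (hθ : θ = Real.arccos (-b / 2))
    (ρ : ℕ) (hres : (N : ℝ) * θ = 2 * Real.pi * ρ)
    (g : ℕ → ℝ → ℝ) (hgcont : ∀ t : ℕ, Continuous (g t))
    (hgper : ∀ (t : ℕ) (x : ℝ), g (t + N) x = g t x)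
    (K : ℝ)
    (hC1 : ∀ (t : ℕ) (x : ℝ), |g t x| ≤ K)
    (z J : ℝ) (hJ : 0 < J)
    (hC2 : ∀ x : ℝ, z ≤ x → ∀ t : ℕ, g t (-x) ≤ -J ∧ J ≤ g t x) :
    ∃ y : ℕ → ℝ, (∀ t : ℕ, y (t + N) = y t) ∧
      ∀ t : ℕ, y (t + 2) + b * y (t + 1) + y t = g t (y t) := by
  obtain ⟨hb₁, hb₂⟩ := abs_lt.mp hb
  have hθ₀ : 0 < θ := hθ ▸ Real.arccos_pos.mpr (by linarith)
  have hθπ : θ < π := hθ ▸ Real.arccos_lt_pi.mpr (by linarith)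
  set e := exp (θ * I)
  have he : ‖e‖ = 1 := norm_exp_ofReal_mul_I θ
  have hroot : e ^ 2 + b * e + 1 = 0 := exp_mul_I_sq_add_mul_add_one <| by
    rw [hθ, Real.cos_arccos (by linarith) (by linarith)]
  have him : e.im ≠ 0 := by
    rw [exp_ofReal_mul_I_im]; exact (Real.sin_pos_of_pos_of_lt_pi hθ₀ hθπ).ne'
  obtain ⟨R, hR, hpos⟩ := exists_radius_forall_norm_eq_sum_pos hNodd hθ₀ hθπ hres hC1 hJ hC2
    (fun v t ↦ 2 * (complexOrbit e g v t).re) (D := 2 * (N * (‖(e - conj e)⁻¹‖ * K)))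
    fun v t ht ↦ by
      have hK₀ : 0 ≤ K := (abs_nonneg _).trans (hC1 0 0)
      rw [← mul_sub, abs_mul, abs_two, ← sub_re]
      grw [abs_re_le_norm, complexOrbit.norm_sub_pow_mul_le he hC1, ht.le]
  obtain ⟨v, hv⟩ := complexOrbit.exists_add_period_of_sum_pos he (exp_mul_I_pow_eq_one hres)
    hgcont hgper hR hpos
  exact ⟨fun t ↦ 2 * (complexOrbit e g v t).re, fun t ↦ by simp only [hv],
    complexOrbit.recurrence_two_mul_re hroot him v⟩

/-- Theorem 4.1, two-dimensional kernel case: Let `N > 1` be odd,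
`|b| < 2`, `c = 1`, `θ = arccos(−b/2)`, and `Nθ = 2πρ` for a positive integer `ρ`.
Suppose `g` is continuous in `x`, `N`-periodic in `t`, and:
(C1) `|g(t,x)| ≤ K`;
(C2) there are `ẑ` and `J > 0` with `g(t,−x) ≤ −J < 0 < J ≤ g(t,x)` for all `x ≥ ẑ`;
(C3) `N / gcd(ρ, N) ≥ max{3, K/J + 1}`.
Then `y(t+2) + b y(t+1) + y(t) = g(t, y(t))` has an `N`-periodic solution. -/
theorem periodic_solution_dim_two
    (N : ℕ) (hN : 1 < N) (hNodd : Odd N)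
    (b : ℝ) (hb : |b| < 2)
    (θ : ℝ) (hθ : θ = Real.arccos (-b / 2))
    (ρ : ℕ) (hρ : 0 < ρ) (hres : (N : ℝ) * θ = 2 * Real.pi * ρ)
    (g : ℕ → ℝ → ℝ) (hgcont : ∀ t : ℕ, Continuous (g t))
    (hgper : ∀ (t : ℕ) (x : ℝ), g (t + N) x = g t x)
    (K : ℝ) (hK : 0 < K)
    (hC1 : ∀ (t : ℕ) (x : ℝ), |g t x| ≤ K)
    (z J : ℝ) (hJ : 0 < J)
    (hC2 : ∀ x : ℝ, z ≤ x → ∀ t : ℕ, g t (-x) ≤ -J ∧ J ≤ g t x)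
    (hC3 : max 3 (K / J + 1) ≤ (N : ℝ) / (Nat.gcd ρ N)) :
    ∃ y : ℕ → ℝ, (∀ t : ℕ, y (t + N) = y t) ∧
      ∀ t : ℕ, y (t + 2) + b * y (t + 1) + y t = g t (y t) :=
  periodic_solution_dim_two_general N hNodd b hb θ hθ ρ hres g hgcont hgper K hC1 z J hJ hC2
end

section
/- An element h ∈ X_N lies in the range of 𝓛 if and only if the vector A^N · Σ_{i=0}^{N−1} A^{−(i+1)} h(i) belongs to the orthogonal complement in ℝ² of Ker((I − A^N)ᵀ). -/
/-!
Iterating `x (t + 1) = A x t + h t` gives `x N = A ^ N x 0 + ∑ i < N, A ^ (N - 1 - i) h i`, and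
for `N`-periodic `h` a solution is `N`-periodic as soon as `x N = x 0`. So `h` is in the range
of `𝓛` iff `(1 - A ^ N) x₀ = A ^ N ∑ i < N, A⁻¹ ^ (i + 1) h i` is solvable, and a vector lies in
the range of a real matrix `M` iff it is orthogonal to `ker Mᵀ` (Fredholm alternative).
-/

open Matrix

open Finset in
theorem eq_pow_mulVec_add_sum_of_forall_succ {n R : Type*} [Fintype n] [DecidableEq n]
    [CommSemiring R] {A : Matrix n n R} {x h : ℕ → n → R}
    (hx : ∀ t, x (t + 1) = A *ᵥ x t + h t) (t : ℕ) :
    x t = A ^ t *ᵥ x 0 + ∑ i ∈ range t, A ^ (t - 1 - i) *ᵥ h i := by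
  induction t with
  | zero => simp
  | succ t ih =>
    have hshift : A *ᵥ ∑ i ∈ range t, A ^ (t - 1 - i) *ᵥ h i
        = ∑ i ∈ range t, A ^ (t - i) *ᵥ h i := by
      rw [mulVec_sum]
      refine sum_congr rfl fun i hi => ?_
      have hit := mem_range.mp hi
      rw [mulVec_mulVec, ← pow_succ', show t - 1 - i + 1 = t - i by omega]
    rw [hx, ih, mulVec_add, mulVec_mulVec, ← pow_succ', hshift, sum_range_succ]
    simp [add_assoc]

theorem Function.Periodic.of_forall_succ {α : Type*} {F : ℕ → α → α} {N : ℕ}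
    (hF : Periodic F N) {x : ℕ → α} (hx : ∀ t, x (t + 1) = F t (x t)) (hN : x N = x 0) :
    Periodic x N := by
  intro t
  induction t with
  | zero => simpa using hN
  | succ t ih => rw [Nat.add_right_comm, hx, hx, ih, hF]

open Finset Function in
theorem exists_periodic_solution_iff {n R : Type*} [Fintype n] [DecidableEq n] [CommRing R]
    (A : Matrix n n R) {h : ℕ → n → R} {N : ℕ} (hper : Periodic h N) :
    (∃ x : ℕ → n → R, Periodic x N ∧ ∀ t, x (t + 1) = A *ᵥ x t + h t) ↔
      ∃ x₀, (1 - A ^ N) *ᵥ x₀ = ∑ i ∈ range N, A ^ (N - 1 - i) *ᵥ h i := by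
  constructor
  · rintro ⟨x, hxper, hx⟩
    have hxN := eq_pow_mulVec_add_sum_of_forall_succ hx N
    rw [show x N = x 0 by simpa using hxper 0] at hxN
    exact ⟨x 0, by rw [sub_mulVec, one_mulVec, sub_eq_iff_eq_add', ← hxN]⟩
  · rintro ⟨x₀, hx₀⟩
    let x : ℕ → n → R := fun t => Nat.rec x₀ (fun t xt => A *ᵥ xt + h t) t
    have hx : ∀ t, x (t + 1) = A *ᵥ x t + h t := fun _ => rfl
    have hxN : x N = x 0 := by
      rw [eq_pow_mulVec_add_sum_of_forall_succ hx N, ← hx₀, sub_mulVec, one_mulVec]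
      exact add_sub_cancel _ _
    have hF : Periodic (fun t v => A *ᵥ v + h t) N := fun t => by simp only [hper t]
    exact ⟨x, hF.of_forall_succ hx hxN, hx⟩

open Finset in
theorem pow_mulVec_sum_inv_pow_mulVec {n R : Type*} [Fintype n] [DecidableEq n] [CommRing R]
    {A : Matrix n n R} (hA : IsUnit A.det) (N : ℕ) (h : ℕ → n → R) :
    A ^ N *ᵥ ∑ i ∈ range N, A⁻¹ ^ (i + 1) *ᵥ h i = ∑ i ∈ range N, A ^ (N - 1 - i) *ᵥ h i := by
  rw [mulVec_sum]
  refine sum_congr rfl fun i hi => ?_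
  rw [mulVec_mulVec, inv_pow', ← pow_sub' A hA (mem_range.mp hi), Nat.sub_sub, Nat.add_comm]

theorem exists_mulVec_eq_iff_forall_dotProduct_eq_zero {m n : Type*} [Fintype m] [Fintype n]
    (M : Matrix m n ℝ) (w : m → ℝ) :
    (∃ x, M *ᵥ x = w) ↔ ∀ v, Mᵀ *ᵥ v = 0 → w ⬝ᵥ v = 0 := by
  classical
  have key := congrArg Submodule.orthogonal (LinearMap.orthogonal_range M.toEuclideanLin)
  rw [Submodule.orthogonal_orthogonal, ← toEuclideanLin_conjTranspose_eq_adjoint] at key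
  have := SetLike.ext_iff.mp key (WithLp.toLp 2 w)
  rw [LinearMap.mem_range, Submodule.mem_orthogonal', (WithLp.equiv 2 (n → ℝ)).exists_congr_left,
    (WithLp.equiv 2 (m → ℝ)).forall_congr_left] at this
  simpa [toLpLin_apply, EuclideanSpace.inner_eq_star_dotProduct, dotProduct_comm w] using this

theorem mem_range_L_iff_orthogonal_general
    (N : ℕ) (b c : ℝ) (hc : c ≠ 0)
    (A : Matrix (Fin 2) (Fin 2) ℝ) (hA : A = !![0, 1; -c, -b])
    (h : ℕ → Fin 2 → ℝ) (hper : ∀ t : ℕ, h (t + N) = h t) :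
    (∃ x : ℕ → Fin 2 → ℝ, (∀ t : ℕ, x (t + N) = x t) ∧
        ∀ t : ℕ, x (t + 1) - A *ᵥ x t = h t) ↔
      ∀ v : Fin 2 → ℝ, (1 - A ^ N)ᵀ *ᵥ v = 0 →
        ((A ^ N) *ᵥ ∑ i ∈ Finset.range N, ((A⁻¹) ^ (i + 1)) *ᵥ h i) ⬝ᵥ v = 0 := by
  have hdet : IsUnit A.det := by simp [hA, det_fin_two_of, hc]
  simp_rw [sub_eq_iff_eq_add']
  rw [← exists_mulVec_eq_iff_forall_dotProduct_eq_zero, pow_mulVec_sum_inv_pow_mulVec hdet]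
  exact exists_periodic_solution_iff A hper

/-- An `N`-periodic `h` lies in the range of `𝓛` (i.e. `𝓛x = h` for some
`N`-periodic `x`, where `(𝓛x)(t) = x(t+1) − A·x(t)`) if and only if
`A^N · Σ_{i<N} A^{−(i+1)} h(i)` is orthogonal to `Ker((I − A^N)ᵀ)`. -/
theorem mem_range_L_iff_orthogonal
    (N : ℕ) (hN : 1 < N) (b c : ℝ) (hc : c ≠ 0)
    (A : Matrix (Fin 2) (Fin 2) ℝ) (hA : A = !![0, 1; -c, -b])
    (h : ℕ → Fin 2 → ℝ) (hper : ∀ t : ℕ, h (t + N) = h t) :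
    (∃ x : ℕ → Fin 2 → ℝ, (∀ t : ℕ, x (t + N) = x t) ∧
        ∀ t : ℕ, x (t + 1) - A *ᵥ x t = h t) ↔
      ∀ v : Fin 2 → ℝ, (1 - A ^ N)ᵀ *ᵥ v = 0 →
        ((A ^ N) *ᵥ ∑ i ∈ Finset.range N, ((A⁻¹) ^ (i + 1)) *ᵥ h i) ⬝ᵥ v = 0 :=
  mem_range_L_iff_orthogonal_general N b c hc A hA h hper
end

section
/- Let V : ℝ² → ℝ² be the orthogonal projection onto Ker(I − A^N), and define P : X_N → X_N by (Px)(t) = A^t V x(0). Then P is well defined (Px is N-periodic for every x ∈ X_N), P is linear, P ∘ P = P, and the range of P equals Ker 𝓛. -/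
open Matrix

/-- Let `V` be the orthogonal projection of `ℝ²` onto `Ker(I − A^N)`
(characterized by: `V u ∈ Ker(I − A^N)`, `V` fixes `Ker(I − A^N)`, and `u − V u` is
orthogonal to `Ker(I − A^N)`), and define `(Px)(t) = A^t V x(0)`.  Then `P` maps
`N`-periodic functions to `N`-periodic functions, is linear, idempotent, and its range on
`X_N` is exactly `Ker 𝓛 = {y ∈ X_N | y(t+1) − A·y(t) = 0}`. -/
theorem P_is_projection_onto_ker_L
    (N : ℕ) (hN : 1 < N) (b c : ℝ) (hc : c ≠ 0)
    (A : Matrix (Fin 2) (Fin 2) ℝ) (hA : A = !![0, 1; -c, -b])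
    (V : (Fin 2 → ℝ) →ₗ[ℝ] (Fin 2 → ℝ))
    (hV1 : ∀ u : Fin 2 → ℝ, (1 - A ^ N) *ᵥ V u = 0)
    (hV2 : ∀ u : Fin 2 → ℝ, (1 - A ^ N) *ᵥ u = 0 → V u = u)
    (hV3 : ∀ u w : Fin 2 → ℝ, (1 - A ^ N) *ᵥ w = 0 → (u - V u) ⬝ᵥ w = 0)
    (P : (ℕ → Fin 2 → ℝ) → (ℕ → Fin 2 → ℝ))
    (hP : ∀ x : ℕ → Fin 2 → ℝ, P x = fun t => (A ^ t) *ᵥ V (x 0)) :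
    (∀ x : ℕ → Fin 2 → ℝ, (∀ t : ℕ, x (t + N) = x t) →
        ∀ t : ℕ, P x (t + N) = P x t) ∧
    (∀ x y : ℕ → Fin 2 → ℝ, P (x + y) = P x + P y) ∧
    (∀ (a : ℝ) (x : ℕ → Fin 2 → ℝ), P (a • x) = a • P x) ∧
    (∀ x : ℕ → Fin 2 → ℝ, (∀ t : ℕ, x (t + N) = x t) → P (P x) = P x) ∧
    (∀ y : ℕ → Fin 2 → ℝ,
      (∃ x : ℕ → Fin 2 → ℝ, (∀ t : ℕ, x (t + N) = x t) ∧ P x = y) ↔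
        ((∀ t : ℕ, y (t + N) = y t) ∧ ∀ t : ℕ, y (t + 1) - A *ᵥ y t = 0)) := by
  -- A^N fixes V u
  have hfix : ∀ u : Fin 2 → ℝ, A ^ N *ᵥ V u = V u := by
    intro u
    have h := hV1 u
    rw [sub_mulVec, one_mulVec, sub_eq_zero] at h
    exact h.symm
  have hper : ∀ x : ℕ → Fin 2 → ℝ, ∀ t : ℕ, P x (t + N) = P x t := by
    intro x t
    rw [hP]
    simp only
    rw [pow_add, ← mulVec_mulVec, hfix]
  refine ⟨fun x _ t => hper x t, ?_, ?_, ?_, ?_⟩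
  · intro x y
    funext t
    rw [hP, hP, hP]
    simp [map_add, mulVec_add]
  · intro a x
    funext t
    rw [hP, hP]
    simp [LinearMap.map_smul, mulVec_smul]
  · intro x _
    funext t
    have h0 : P x 0 = V (x 0) := by rw [hP]; simp
    rw [hP (P x), hP]
    simp only [pow_zero, one_mulVec]
    rw [hV2 (V (x 0)) (hV1 (x 0))]
  · intro y
    constructor
    · rintro ⟨x, -, rfl⟩
      refine ⟨hper x, fun t => ?_⟩
      rw [hP]
      simp only
      rw [pow_succ', ← mulVec_mulVec, sub_self]
    · rintro ⟨hyp, hker⟩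
      have hiter : ∀ t, y t = A ^ t *ᵥ y 0 := by
        intro t
        induction t with
        | zero => simp
        | succ t ih =>
          have h := hker t
          rw [sub_eq_zero] at h
          rw [h, ih, mulVec_mulVec, ← pow_succ']
      have hy0 : (1 - A ^ N) *ᵥ y 0 = 0 := by
        have : y N = y 0 := by simpa using hyp 0
        rw [sub_mulVec, one_mulVec, ← hiter N, this, sub_self]
      refine ⟨y, hyp, ?_⟩
      funext t
      rw [hP]
      simp only
      rw [hV2 (y 0) hy0, ← hiter t]
end

section
/- Let W be a 2×m real matrix whose columns form a basis of Ker((I − A^N)ᵀ), and set Ψ(t) = (A^{−t})ᵀ(A^N)ᵀ W for t ∈ ℕ. Then the m×m Gram matrix G = Σ_{j=0}^{N−1} Ψ(j)ᵀΨ(j) is invertible, the map Q : X_N → X_N defined by (Qh)(t) = Ψ(t)·G^{−1}·Σ_{i=0}^{N−1} Ψ(i)ᵀ h(i) is well defined (Qh is N-periodic), linear, satisfies Q ∘ Q = Q, and the kernel of Q equals the range of 𝓛. -/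
/-!
Since the columns of `W` are fixed by `(A ^ N)ᵀ`, `Ψ t = (Wᵀ A⁻ᵗ)ᵀ` is `N`-periodic, `Ψ 0 = W` is
injective, and `p t = (Ψ t)ᵀ` solves the adjoint equation `p (t + 1) A = p t`. Hence `G` is positive
definite, `Q` is the `ℓ²`-orthogonal projection onto the span of the columns of `Ψ`, and `Q h = 0`
iff `∑ (Ψ i)ᵀ h i = 0`. Summation by parts against `p` shows that this sum vanishes on the range
of `𝓛`. Conversely, the solution of `x (t + 1) = A x t + h t` is `N`-periodic iff
`(1 - A ^ N) x 0 = y N`, where `y` is the solution with `y 0 = 0`; this equation is solvable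
because summation by parts also shows that `y N` is orthogonal to
`Ker ((1 - A ^ N)ᵀ) = Aᵀ (range W)`.
-/

open Matrix Finset Function

section

variable {m n k : Type*} [Fintype n]

theorem Matrix.exists_mulVec_eq_of_forall_dotProduct_eq_zero [Fintype m] [DecidableEq m]
    [DecidableEq n] (M : Matrix m n ℝ) (v : m → ℝ) (hv : ∀ w, Mᵀ *ᵥ w = 0 → w ⬝ᵥ v = 0) :
    ∃ u, M *ᵥ u = v := by
  have hmem : WithLp.toLp 2 v ∈ (LinearMap.ker (toEuclideanLin Mᵀ))ᗮ := by
    rw [Submodule.mem_orthogonal']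
    intro w hw
    have hw' : Mᵀ *ᵥ w.ofLp = 0 := by simpa using congrArg WithLp.ofLp hw
    simpa [EuclideanSpace.inner_eq_star_dotProduct] using hv _ hw'
  rw [LinearMap.orthogonal_ker, ← toEuclideanLin_conjTranspose_eq_adjoint,
    conjTranspose_eq_transpose_of_trivial, transpose_transpose] at hmem
  obtain ⟨u, hu⟩ := hmem
  exact ⟨u.ofLp, by simpa using congrArg WithLp.ofLp hu⟩

theorem Matrix.isUnit_sum_transpose_mul_self [Fintype k] [DecidableEq k] {ι : Type*} (s : Finset ι)
    (Ψ : ι → Matrix n k ℝ) {i₀ : ι} (hi₀ : i₀ ∈ s) (hΨ : Injective (Ψ i₀).mulVec) :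
    IsUnit (∑ i ∈ s, (Ψ i)ᵀ * Ψ i) := by
  classical
  rw [← add_sum_erase s _ hi₀]
  refine PosDef.isUnit (PosDef.add_posSemidef ?_ (posSemidef_sum _ fun i _ => ?_))
  · simpa [conjTranspose_eq_transpose_of_trivial] using PosDef.conjTranspose_mul_self _ hΨ
  · simpa [conjTranspose_eq_transpose_of_trivial] using posSemidef_conjTranspose_mul_self (Ψ i)

section DifferenceEquation

variable {R : Type*} [CommRing R] (A : Matrix n n R) (h : ℕ → n → R)

def Matrix.forcedTrajectory (x₀ : n → R) : ℕ → n → R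
  | 0 => x₀
  | t + 1 => A *ᵥ forcedTrajectory x₀ t + h t

theorem Matrix.forcedTrajectory_succ_sub (x₀ : n → R) (t : ℕ) :
    A.forcedTrajectory h x₀ (t + 1) - A *ᵥ A.forcedTrajectory h x₀ t = h t :=
  add_sub_cancel_left _ _

theorem Matrix.forcedTrajectory_eq_pow_mulVec_add [DecidableEq n] (x₀ : n → R) (t : ℕ) :
    A.forcedTrajectory h x₀ t = A ^ t *ᵥ x₀ + A.forcedTrajectory h 0 t := by
  induction t with
  | zero => simp [forcedTrajectory]
  | succ t ih =>
    simp only [forcedTrajectory, ih, mulVec_add, mulVec_mulVec, pow_succ']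
    abel

variable {A h}

theorem Function.Periodic.of_succ_sub_mulVec {x : ℕ → n → R} {N : ℕ}
    (hx : ∀ t, x (t + 1) - A *ᵥ x t = h t) (hh : Periodic h N) (hxN : x N = x 0) :
    Periodic x N := by
  intro t
  induction t with
  | zero => simpa using hxN
  | succ t ih =>
    rw [add_right_comm, sub_eq_iff_eq_add.mp (hx t), sub_eq_iff_eq_add.mp (hx (t + N)), ih, hh t]

theorem Matrix.sum_mulVec_eq_sub_of_adjoint {p : ℕ → Matrix k n R} (hp : ∀ t, p (t + 1) * A = p t)
    {x : ℕ → n → R} (hx : ∀ t, x (t + 1) - A *ᵥ x t = h t) (N : ℕ) :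
    ∑ t ∈ range N, p t *ᵥ h t = p N *ᵥ (A *ᵥ x N) - p 0 *ᵥ (A *ᵥ x 0) := by
  rw [← sum_range_sub (fun t => p t *ᵥ (A *ᵥ x t))]
  refine sum_congr rfl fun t _ => ?_
  rw [← hx t, mulVec_sub, mulVec_mulVec, mulVec_mulVec, hp]

theorem Matrix.sum_mulVec_eq_zero_of_periodic {p : ℕ → Matrix k n R}
    (hp : ∀ t, p (t + 1) * A = p t) {N : ℕ} (hpN : p N = p 0) {x : ℕ → n → R}
    (hxN : Periodic x N) (hx : ∀ t, x (t + 1) - A *ᵥ x t = h t) :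
    ∑ t ∈ range N, p t *ᵥ h t = 0 := by
  rw [sum_mulVec_eq_sub_of_adjoint hp hx, hpN, hxN.eq, sub_self]

end DifferenceEquation

section PeriodicFredholm

variable [DecidableEq n] {A : Matrix n n ℝ} {N : ℕ} {W : Matrix n k ℝ}

theorem Matrix.transpose_pow_mul_eq_self_of_range_le [Fintype k]
    (hW : LinearMap.range W.mulVecLin ≤ LinearMap.ker (1 - A ^ N)ᵀ.mulVecLin) :
    (A ^ N)ᵀ * W = W := by
  classical
  refine ext_of_mulVec_single fun j => ?_
  rw [← mulVec_mulVec]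
  simpa [transpose_sub, sub_mulVec, sub_eq_zero, mulVec_mulVec, eq_comm] using
    hW ⟨Pi.single j 1, rfl⟩

theorem Matrix.transpose_mul_inv_pow_eq_self (hA : IsUnit A.det) (hW : (A ^ N)ᵀ * W = W) :
    Wᵀ * A⁻¹ ^ N = Wᵀ := by
  have hWt : Wᵀ * A ^ N = Wᵀ := by simpa [transpose_mul] using congrArg transpose hW
  conv_lhs => rw [← hWt, Matrix.mul_assoc, inv_pow', mul_nonsing_inv _ (det_pow A N ▸ hA.pow N),
    Matrix.mul_one]

theorem Matrix.mul_inv_pow_succ_mul_self (hA : IsUnit A.det) (t : ℕ) :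
    Wᵀ * A⁻¹ ^ (t + 1) * A = Wᵀ * A⁻¹ ^ t := by
  rw [pow_succ, Matrix.mul_assoc, Matrix.mul_assoc, nonsing_inv_mul A hA, Matrix.mul_one]

theorem Matrix.exists_periodic_solution_of_sum_eq_zero [Fintype k] (hA : IsUnit A.det)
    (hW : LinearMap.range W.mulVecLin = LinearMap.ker (1 - A ^ N)ᵀ.mulVecLin) {h : ℕ → n → ℝ}
    (hh : Periodic h N) (hS : ∑ t ∈ range N, (Wᵀ * A⁻¹ ^ t) *ᵥ h t = 0) :
    ∃ x : ℕ → n → ℝ, Periodic x N ∧ ∀ t, x (t + 1) - A *ᵥ x t = h t := by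
  have hy : Wᵀ *ᵥ (A *ᵥ A.forcedTrajectory h 0 N) = 0 := by
    have := sum_mulVec_eq_sub_of_adjoint (p := fun t => Wᵀ * A⁻¹ ^ t) (mul_inv_pow_succ_mul_self hA)
      (forcedTrajectory_succ_sub A h 0) N
    rwa [hS, transpose_mul_inv_pow_eq_self hA (transpose_pow_mul_eq_self_of_range_le hW.le),
      eq_comm, forcedTrajectory, mulVec_zero, mulVec_zero, sub_zero] at this
  have horth : ∀ w, (1 - A ^ N)ᵀ *ᵥ w = 0 → w ⬝ᵥ A.forcedTrajectory h 0 N = 0 := by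
    intro w hw
    -- `Aᵀ` maps the kernel of `(1 - A ^ N)ᵀ` onto itself, so `w = Aᵀ W e` for some `e`.
    have hcomm : Commute A⁻¹ (1 - A ^ N) :=
      (Commute.one_right _).sub_right <| Commute.pow_right
        ((nonsing_inv_mul A hA).trans (mul_nonsing_inv A hA).symm) N
    obtain ⟨e, he⟩ : (A⁻¹)ᵀ *ᵥ w ∈ LinearMap.range W.mulVecLin := by
      rw [hW, LinearMap.mem_ker, mulVecLin_apply, mulVec_mulVec, ← transpose_mul, hcomm.eq,
        transpose_mul, ← mulVec_mulVec, hw, mulVec_zero]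
    have hwe : w = (Aᵀ * W) *ᵥ e := by
      rw [mulVecLin_apply] at he
      rw [← mulVec_mulVec, he, mulVec_mulVec, ← transpose_mul,
        nonsing_inv_mul A hA, transpose_one, one_mulVec]
    rw [hwe, dotProduct_comm, dotProduct_mulVec, ← mulVec_transpose, transpose_mul,
      transpose_transpose, ← mulVec_mulVec, hy, zero_dotProduct]
  obtain ⟨x₀, hx₀⟩ := (1 - A ^ N).exists_mulVec_eq_of_forall_dotProduct_eq_zero _ horth
  have hx := forcedTrajectory_succ_sub A h x₀
  refine ⟨_, .of_succ_sub_mulVec hx hh ?_, hx⟩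
  rw [forcedTrajectory_eq_pow_mulVec_add, ← hx₀, sub_mulVec, one_mulVec, add_sub_cancel]
  rfl

theorem Matrix.sum_eq_zero_iff_exists_periodic_solution [Fintype k] (hA : IsUnit A.det)
    (hW : LinearMap.range W.mulVecLin = LinearMap.ker (1 - A ^ N)ᵀ.mulVecLin) {h : ℕ → n → ℝ}
    (hh : Periodic h N) :
    ∑ t ∈ range N, (Wᵀ * A⁻¹ ^ t) *ᵥ h t = 0 ↔
      ∃ x : ℕ → n → ℝ, Periodic x N ∧ ∀ t, x (t + 1) - A *ᵥ x t = h t := by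
  refine ⟨exists_periodic_solution_of_sum_eq_zero hA hW hh, fun ⟨x, hxN, hx⟩ => ?_⟩
  refine sum_mulVec_eq_zero_of_periodic (p := fun t => Wᵀ * A⁻¹ ^ t)
    (mul_inv_pow_succ_mul_self hA) ?_ hxN hx
  rw [pow_zero, Matrix.mul_one]
  exact transpose_mul_inv_pow_eq_self hA (transpose_pow_mul_eq_self_of_range_le hW.le)

end PeriodicFredholm

section GramProjection

variable [Fintype k] [DecidableEq k] (Ψ : ℕ → Matrix n k ℝ) (N : ℕ)

def gramMatrix : Matrix k k ℝ := ∑ j ∈ range N, (Ψ j)ᵀ * Ψ j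

noncomputable def gramProjection : (ℕ → n → ℝ) →ₗ[ℝ] ℕ → n → ℝ where
  toFun h t := Ψ t *ᵥ ((gramMatrix Ψ N)⁻¹ *ᵥ ∑ i ∈ range N, (Ψ i)ᵀ *ᵥ h i)
  map_add' h h' := by ext; simp [mulVec_add, sum_add_distrib]
  map_smul' a h := by ext; simp [mulVec_smul, ← smul_sum]

@[simp]
theorem gramProjection_apply (h : ℕ → n → ℝ) (t : ℕ) :
    gramProjection Ψ N h t = Ψ t *ᵥ ((gramMatrix Ψ N)⁻¹ *ᵥ ∑ i ∈ range N, (Ψ i)ᵀ *ᵥ h i) :=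
  rfl

variable {Ψ N}

theorem gramProjection_periodic (hΨ : Periodic Ψ N) (h : ℕ → n → ℝ) :
    Periodic (gramProjection Ψ N h) N := fun t => by
  simp only [gramProjection_apply, hΨ t]

theorem gramProjection_gramProjection (hG : IsUnit (gramMatrix Ψ N)) (h : ℕ → n → ℝ) :
    gramProjection Ψ N (gramProjection Ψ N h) = gramProjection Ψ N h := by
  ext t : 1
  have hGG : (gramMatrix Ψ N)⁻¹ * gramMatrix Ψ N = 1 :=
    nonsing_inv_mul _ ((isUnit_iff_isUnit_det _).mp hG)
  have hsum (v : k → ℝ) : ∑ i ∈ range N, (Ψ i)ᵀ *ᵥ (Ψ i *ᵥ v) = gramMatrix Ψ N *ᵥ v := by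
    simp only [gramMatrix, sum_mulVec, mulVec_mulVec]
  simp only [gramProjection_apply]
  rw [hsum, mulVec_mulVec _ _ (gramMatrix Ψ N), hGG, one_mulVec]

theorem gramProjection_eq_zero_iff (hG : IsUnit (gramMatrix Ψ N)) {t₀ : ℕ}
    (hΨ : Injective (Ψ t₀).mulVec) (h : ℕ → n → ℝ) :
    gramProjection Ψ N h = 0 ↔ ∑ i ∈ range N, (Ψ i)ᵀ *ᵥ h i = 0 := by
  refine ⟨fun hQ => ?_, fun hS => by ext; simp [hS]⟩
  have h₀ : Ψ t₀ *ᵥ ((gramMatrix Ψ N)⁻¹ *ᵥ ∑ i ∈ range N, (Ψ i)ᵀ *ᵥ h i) = Ψ t₀ *ᵥ 0 := by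
    rw [← gramProjection_apply, hQ, mulVec_zero, Pi.zero_apply]
  exact mulVec_injective_of_isUnit (isUnit_nonsing_inv_iff.mpr hG) <|
    (hΨ h₀).trans (mulVec_zero _).symm

end GramProjection

end

/-- Let `W` be a `2×m` matrix whose columns form a basis of
`Ker((I − A^N)ᵀ)` and set `Ψ(t) = (A^{−t})ᵀ(A^N)ᵀ W`.  Then the Gram matrix
`G = Σ_{j<N} Ψ(j)ᵀΨ(j)` is invertible, and the map
`(Qh)(t) = Ψ(t)·G⁻¹·Σ_{i<N} Ψ(i)ᵀ h(i)` maps `N`-periodic functions to `N`-periodic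
functions, is linear, idempotent, and its kernel on `X_N` equals the range of `𝓛`. -/
theorem Q_is_projection_with_ker_range_L
    (N : ℕ) (hN : 1 < N) (b c : ℝ) (hc : c ≠ 0)
    (A : Matrix (Fin 2) (Fin 2) ℝ) (hA : A = !![0, 1; -c, -b])
    (m : ℕ) (W : Matrix (Fin 2) (Fin m) ℝ)
    (hWli : LinearIndependent ℝ (fun j : Fin m => Wᵀ j))
    (hWspan : Submodule.span ℝ (Set.range fun j : Fin m => Wᵀ j) =
      LinearMap.ker (((1 - A ^ N)ᵀ).mulVecLin))
    (Ψ : ℕ → Matrix (Fin 2) (Fin m) ℝ)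
    (hΨ : ∀ t : ℕ, Ψ t = ((A⁻¹) ^ t)ᵀ * (A ^ N)ᵀ * W)
    (G : Matrix (Fin m) (Fin m) ℝ)
    (hG : G = ∑ j ∈ Finset.range N, (Ψ j)ᵀ * Ψ j)
    (Q : (ℕ → Fin 2 → ℝ) → (ℕ → Fin 2 → ℝ))
    (hQ : ∀ h : ℕ → Fin 2 → ℝ,
      Q h = fun t => Ψ t *ᵥ (G⁻¹ *ᵥ ∑ i ∈ Finset.range N, (Ψ i)ᵀ *ᵥ h i)) :
    IsUnit G ∧
    (∀ h : ℕ → Fin 2 → ℝ, (∀ t : ℕ, h (t + N) = h t) →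
        ∀ t : ℕ, Q h (t + N) = Q h t) ∧
    (∀ h k : ℕ → Fin 2 → ℝ, Q (h + k) = Q h + Q k) ∧
    (∀ (a : ℝ) (h : ℕ → Fin 2 → ℝ), Q (a • h) = a • Q h) ∧
    (∀ h : ℕ → Fin 2 → ℝ, Q (Q h) = Q h) ∧
    (∀ h : ℕ → Fin 2 → ℝ, (∀ t : ℕ, h (t + N) = h t) →
      (Q h = 0 ↔ ∃ x : ℕ → Fin 2 → ℝ, (∀ t : ℕ, x (t + N) = x t) ∧
        ∀ t : ℕ, x (t + 1) - A *ᵥ x t = h t)) := by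
  have hAdet : IsUnit A.det := by simpa [hA, det_fin_two_of] using hc
  have hW : LinearMap.range W.mulVecLin = LinearMap.ker (1 - A ^ N)ᵀ.mulVecLin := by
    rwa [range_mulVecLin]
  have hWN : (A ^ N)ᵀ * W = W := transpose_pow_mul_eq_self_of_range_le hW.le
  replace hΨ (t : ℕ) : Ψ t = (Wᵀ * A⁻¹ ^ t)ᵀ := by
    rw [hΨ, Matrix.mul_assoc, hWN, transpose_mul, transpose_transpose]
  obtain rfl : G = gramMatrix Ψ N := hG
  obtain rfl : Q = gramProjection Ψ N := funext hQ
  have hΨN : Periodic Ψ N := fun t => by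
    rw [hΨ, hΨ, add_comm, pow_add, ← Matrix.mul_assoc, transpose_mul_inv_pow_eq_self hAdet hWN]
  have hΨ₀ : Injective (Ψ 0).mulVec := by
    rw [hΨ, pow_zero, Matrix.mul_one, transpose_transpose, mulVec_injective_iff]
    exact hWli
  have hG : IsUnit (gramMatrix Ψ N) :=
    isUnit_sum_transpose_mul_self _ Ψ (mem_range.mpr (by omega)) hΨ₀
  refine ⟨hG, fun h _ => gramProjection_periodic hΨN h, map_add _, map_smul _,
    gramProjection_gramProjection hG, fun h hh => (gramProjection_eq_zero_iff hG hΨ₀ h).trans ?_⟩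
  simp only [hΨ, transpose_transpose]
  exact sum_eq_zero_iff_exists_periodic_solution hAdet hW hh
end

section
/- Let X be a real vector space, 𝓛 : X → X a linear map, P : X → X a linear projection (P ∘ P = P) whose range equals Ker 𝓛, and Q : X → X a linear projection (Q ∘ Q = Q) whose kernel equals the range of 𝓛. Then 𝓛 restricts to a linear bijection from Ker P onto the range of 𝓛; let M_p : range 𝓛 → Ker P denote its inverse. For any map 𝓕 : X → X and any x ∈ X, the equation 𝓛x = 𝓕(x) holds if and only if both x = Px + M_p((I − Q)𝓕(x)) and Q(𝓕(x)) = 0 hold. (Note that (I − Q)𝓕(x) lies in Ker Q = range 𝓛, so M_p may be applied to it.) -/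
/-- abstract Lyapunov–Schmidt: Let `X` be a real vector space,
`𝓛 : X → X` linear, `P` a projection with range `Ker 𝓛`, `Q` a projection with kernel
`range 𝓛`.  Then `𝓛` restricts to a bijection from `Ker P` onto `range 𝓛`, and if
`M_p` denotes (any function acting as) its inverse, then for every `𝓕 : X → X` and
`x ∈ X`:  `𝓛x = 𝓕(x)` iff `x = Px + M_p((I − Q)𝓕(x))` and `Q(𝓕(x)) = 0`. -/
theorem lyapunov_schmidt
    (X : Type*) [AddCommGroup X] [Module ℝ X]
    (L P Q : X →ₗ[ℝ] X)
    (hPproj : P ∘ₗ P = P) (hPrange : LinearMap.range P = LinearMap.ker L)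
    (hQproj : Q ∘ₗ Q = Q) (hQker : LinearMap.ker Q = LinearMap.range L) :
    (∀ y ∈ LinearMap.range L, ∃! x : X, x ∈ LinearMap.ker P ∧ L x = y) ∧
    ∀ Mp : X → X,
      (∀ y ∈ LinearMap.range L, Mp y ∈ LinearMap.ker P ∧ L (Mp y) = y) →
      ∀ (F : X → X) (x : X),
        L x = F x ↔ (x = P x + Mp (F x - Q (F x)) ∧ Q (F x) = 0) := by
  have hPP : ∀ z : X, P (P z) = P z := fun z => congrArg (fun f => f z) (congrArg DFunLike.coe hPproj)
  have hQQ : ∀ z : X, Q (Q z) = Q z := fun z => congrArg (fun f => f z) (congrArg DFunLike.coe hQproj)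
  have hLP : ∀ z : X, L (P z) = 0 := by
    intro z
    have : P z ∈ LinearMap.ker L := hPrange ▸ LinearMap.mem_range_self P z
    simpa using this
  -- key: if d ∈ ker L and P d = 0 then d = 0
  have hkey : ∀ d : X, L d = 0 → P d = 0 → d = 0 := by
    intro d hLd hPd
    have : d ∈ LinearMap.range P := hPrange ▸ (LinearMap.mem_ker.mpr hLd)
    obtain ⟨w, hw⟩ := this
    have hd : P d = d := by rw [← hw, hPP]
    rw [← hd, hPd]
  constructor
  · rintro y ⟨z, rfl⟩
    refine ⟨z - P z, ⟨?_, ?_⟩, ?_⟩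
    · simp [LinearMap.mem_ker, map_sub, hPP]
    · simp [map_sub, hLP]
    · rintro x ⟨hx1, hx2⟩
      have h1 : L (x - (z - P z)) = 0 := by simp [map_sub, hx2, hLP]
      have h2 : P (x - (z - P z)) = 0 := by
        have hx1' : P x = 0 := hx1
        simp [map_sub, hx1', hPP]
      have := hkey _ h1 h2
      have : x - (z - P z) = 0 := this
      linear_combination (norm := abel) this
  · intro Mp hMp F x
    constructor
    · intro hLx
      have hFr : F x ∈ LinearMap.range L := ⟨x, hLx⟩
      have hQF : Q (F x) = 0 := by
        have : F x ∈ LinearMap.ker Q := hQker ▸ hFr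
        simpa using this
      refine ⟨?_, hQF⟩
      have hFs : F x - Q (F x) = F x := by rw [hQF]; abel
      obtain ⟨hMker, hML⟩ := hMp (F x - Q (F x)) (by rw [hFs]; exact hFr)
      set m := Mp (F x - Q (F x)) with hm
      have h1 : L (x - P x - m) = 0 := by
        simp [map_sub, hLP, hML, hFs, hLx]
      have h2 : P (x - P x - m) = 0 := by
        have hMk : P m = 0 := hMker
        simp [map_sub, hPP, hMk]
      have := hkey _ h1 h2
      linear_combination (norm := abel) this
    · rintro ⟨hx, hQF⟩
      have hFs : F x - Q (F x) = F x := by rw [hQF]; abel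
      have hFr : F x ∈ LinearMap.range L := by
        rw [← hQker, ← hFs]
        simp [LinearMap.mem_ker, map_sub, hQQ]
      obtain ⟨hMker, hML⟩ := hMp (F x - Q (F x)) (by rw [hFs]; exact hFr)
      conv_lhs => rw [hx]
      rw [map_add, hLP, hML, hFs, zero_add]
end

section
/- Let N > 1 be an integer, b, c real constants with c ≠ 0, and suppose Ker(I − A^N) = {0}. Then 𝓛 : X_N → X_N is bijective. Moreover, if g : ℕ × ℝ → ℝ is continuous in its second variable and N-periodic in its first variable, and there are positive constants r, δ with |g(t,x)| ≤ δ for all t ∈ ℕ and all x ∈ [−2r, 2r], and ‖𝓛^{−1}‖·δ < r, then there exists an N-periodic function y : ℕ → ℝ satisfying y(t+2) + b·y(t+1) + c·y(t) = g(t, y(t)) for all t ∈ ℕ, and such that sup_t |(y(t), y(t+1))| ≤ r. -/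
/-!
With `x t = (y t, y (t + 1))` the equation becomes the system `x (t + 1) = A x t + (0, g (t, y t))`.
Its trajectory from `v` reaches `A ^ N v + Q v` at time `N`, where `Q` is continuous, and bounded
once `g` is truncated outside `[-2r, 2r]`. Since `1 - A ^ N` is invertible, `N`-periodic
trajectories correspond to the fixed points of `v ↦ (1 - A ^ N)⁻¹ Q v`, a bounded continuous
self-map of the plane; it has one by Brouwer's theorem, which follows from Sperner's lemma (a parity
count of doors) and compactness of the triangle. When the forcing does not depend on `x`, `Q` is
constant, which gives the bijectivity of `𝓛`. By uniqueness a periodic solution is `𝓛⁻¹` of its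
forcing, so its norm is at most `C δ < r`; then `|y| ≤ r`, where the truncation does nothing.
-/

open Matrix

/-- The Euclidean norm of a vector in `ℝ²`. -/
noncomputable def euclNorm2 (v : Fin 2 → ℝ) : ℝ := Real.sqrt (v 0 ^ 2 + v 1 ^ 2)

/-- The supremum norm on functions `ℕ → ℝ²` (with the Euclidean norm on `ℝ²`). -/
noncomputable def supNorm (x : ℕ → Fin 2 → ℝ) : ℝ := ⨆ t : ℕ, euclNorm2 (x t)

namespace Sperner

open Finset

def door (a b : Fin 3) : ZMod 2 := if (a = 0 ∧ b = 1) ∨ (a = 1 ∧ b = 0) then 1 else 0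

-- A triangle has an odd number of doors (edges labelled `{0, 1}`) iff it is fully labelled.
def doors (a b c : Fin 3) : ZMod 2 := door a b + door a c + door b c

theorem door_self (a : Fin 3) : door a a = 0 := by decide +revert

theorem door_eq_zero_of_ne_zero {a b : Fin 3} (ha : a ≠ 0) (hb : b ≠ 0) : door a b = 0 := by
  decide +revert

theorem door_eq_zero_of_ne_one {a b : Fin 3} (ha : a ≠ 1) (hb : b ≠ 1) : door a b = 0 := by
  decide +revert

theorem door_add_door {a b c : Fin 3} (ha : a ≠ 2) (hb : b ≠ 2) (hc : c ≠ 2) :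
    door a b + door b c = door a c := by
  decide +revert

theorem mem_of_doors_ne_zero {a b c : Fin 3} (h : doors a b c ≠ 0) (k : Fin 3) :
    k = a ∨ k = b ∨ k = c := by
  decide +revert

theorem sum_door_eq_door (f : ℕ → Fin 3) (m : ℕ) (hf : ∀ i ≤ m, f i ≠ 2) :
    ∑ i ∈ range m, door (f i) (f (i + 1)) = door (f 0) (f m) := by
  induction m with
  | zero => simp [door_self]
  | succ m ih =>
    rw [sum_range_succ, ih fun i hi => hf i (by omega),
      door_add_door (hf 0 (by omega)) (hf m (by omega)) (hf (m + 1) le_rfl)]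

-- The triangles between two rows `u` (below) and `w` (above): each interior edge of the strip
-- lies in two of them, so modulo 2 only its two slanted ends and its horizontal sides remain.
theorem sum_doors_strip (u w : ℕ → Fin 3) (m : ℕ) :
    ∑ i ∈ range (m + 1), doors (u i) (u (i + 1)) (w i) +
        ∑ i ∈ range m, doors (u (i + 1)) (w i) (w (i + 1)) =
      door (u 0) (w 0) + door (u (m + 1)) (w m) + ∑ i ∈ range (m + 1), door (u i) (u (i + 1)) +
        ∑ i ∈ range m, door (w i) (w (i + 1)) := by
  induction m with
  | zero => simp only [doors, zero_add, sum_range_one, range_zero, sum_empty, add_zero]; ring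
  | succ m ih =>
    rw [sum_range_succ (fun i => doors (u i) _ _), sum_range_succ (fun i => doors (u (i + 1)) _ _),
      sum_range_succ (fun i => door (u i) _), sum_range_succ (fun i => door (w i) _)]
    unfold doors at *
    grind

-- `l` labels the vertices `(i, j)`, `i + j ≤ n`, of the triangle of side `n`; the cell `(i, j)`
-- is split into the triangles `(i, j), (i + 1, j), (i, j + 1)` and
-- `(i + 1, j), (i, j + 1), (i + 1, j + 1)`.
variable {n : ℕ} {l : ℕ → ℕ → Fin 3}

theorem sum_doors_eq_one (hbot : ∀ i ≤ n, l i 0 ≠ 2) (hleft : ∀ j ≤ n, l 0 j ≠ 1)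
    (hhyp : ∀ i j, i + j = n → l i j ≠ 0) :
    ∑ j ∈ range n, (∑ i ∈ range (n - j), doors (l i j) (l (i + 1) j) (l i (j + 1)) +
      ∑ i ∈ range (n - j - 1), doors (l (i + 1) j) (l i (j + 1)) (l (i + 1) (j + 1))) = 1 := by
  set R : ℕ → ZMod 2 := fun j => ∑ i ∈ range (n - j), door (l i j) (l (i + 1) j) with hR
  have hstrip : ∀ j ∈ range n,
      ∑ i ∈ range (n - j), doors (l i j) (l (i + 1) j) (l i (j + 1)) +
        ∑ i ∈ range (n - j - 1), doors (l (i + 1) j) (l i (j + 1)) (l (i + 1) (j + 1)) =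
      R (j + 1) - R j := by
    intro j hj
    rw [mem_range] at hj
    obtain ⟨m, hm⟩ : ∃ m, n - j = m + 1 := ⟨n - j - 1, by omega⟩
    have hm' : n - (j + 1) = m := by omega
    rw [hm, Nat.add_sub_cancel, sum_doors_strip (l · j) (l · (j + 1)),
      door_eq_zero_of_ne_one (hleft j (by omega)) (hleft (j + 1) (by omega)),
      door_eq_zero_of_ne_zero (hhyp _ _ (by omega)) (hhyp _ _ (by omega)), CharTwo.sub_eq_add]
    simp only [hR, hm, hm']
    ring
  have hcorner₀ : l 0 0 = 0 := by have := hbot 0 (by omega); have := hleft 0 (by omega); omega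
  have hcorner₁ : l n 0 = 1 := by have := hbot n le_rfl; have := hhyp n 0 rfl; omega
  rw [sum_congr rfl hstrip, sum_range_sub, hR]
  simp only [Nat.sub_self, range_zero, sum_empty, Nat.sub_zero]
  rw [sum_door_eq_door (l · 0) n hbot, hcorner₀, hcorner₁]
  decide

theorem exists_labelling_of_doors_ne_zero {v : Fin 3 → ℕ × ℕ}
    (h : doors (l (v 0).1 (v 0).2) (l (v 1).1 (v 1).2) (l (v 2).1 (v 2).2) ≠ 0) :
    ∃ σ : Fin 3 → Fin 3, ∀ k, l (v (σ k)).1 (v (σ k)).2 = k := by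
  have hlabel : ∀ k, ∃ a, l (v a).1 (v a).2 = k := fun k => by
    rcases mem_of_doors_ne_zero h k with hk | hk | hk
    exacts [⟨0, hk.symm⟩, ⟨1, hk.symm⟩, ⟨2, hk.symm⟩]
  choose σ hσ using hlabel
  exact ⟨σ, hσ⟩

theorem exists_fully_labelled_cell (hbot : ∀ i ≤ n, l i 0 ≠ 2) (hleft : ∀ j ≤ n, l 0 j ≠ 1)
    (hhyp : ∀ i j, i + j = n → l i j ≠ 0) :
    ∃ p : Fin 3 → ℕ × ℕ, ∀ k, l (p k).1 (p k).2 = k ∧ (p k).1 + (p k).2 ≤ n ∧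
      ∀ k', (p k).1 ≤ (p k').1 + 1 ∧ (p k).2 ≤ (p k').2 + 1 := by
  obtain ⟨j, hj, hstrip⟩ :=
    exists_ne_zero_of_sum_ne_zero ((sum_doors_eq_one hbot hleft hhyp).trans_ne one_ne_zero)
  rw [mem_range] at hj
  have hcell : ∃ v : Fin 3 → ℕ × ℕ,
      doors (l (v 0).1 (v 0).2) (l (v 1).1 (v 1).2) (l (v 2).1 (v 2).2) ≠ 0 ∧
      (∀ a, (v a).1 + (v a).2 ≤ n) ∧ ∀ a b, (v a).1 ≤ (v b).1 + 1 ∧ (v a).2 ≤ (v b).2 + 1 := by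
    by_cases hlower : ∃ i ∈ range (n - j), doors (l i j) (l (i + 1) j) (l i (j + 1)) ≠ 0
    · obtain ⟨i, hi, h⟩ := hlower
      rw [mem_range] at hi
      refine ⟨![(i, j), (i + 1, j), (i, j + 1)], h, fun a => ?_, fun a b => ?_⟩
      · fin_cases a <;> simp <;> omega
      · fin_cases a <;> fin_cases b <;> simp <;> omega
    · push Not at hlower
      rw [sum_eq_zero hlower, zero_add] at hstrip
      obtain ⟨i, hi, h⟩ := exists_ne_zero_of_sum_ne_zero hstrip
      rw [mem_range] at hi
      refine ⟨![(i + 1, j), (i, j + 1), (i + 1, j + 1)], h, fun a => ?_, fun a b => ?_⟩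
      · fin_cases a <;> simp <;> omega
      · fin_cases a <;> fin_cases b <;> simp <;> omega
  obtain ⟨v, hv, hsum, hclose⟩ := hcell
  obtain ⟨σ, hσ⟩ := exists_labelling_of_doors_ne_zero hv
  exact ⟨v ∘ σ, fun k => ⟨hσ k, hsum _, fun k' => hclose _ _⟩⟩

end Sperner

section Brouwer

open Finset Filter Topology

theorem exists_pos_apply_le_of_mem_stdSimplex {ι : Type*} [Fintype ι] {x y : ι → ℝ}
    (hx : x ∈ stdSimplex ℝ ι) (hy : y ∈ stdSimplex ℝ ι) : ∃ k, 0 < x k ∧ y k ≤ x k := by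
  by_contra! h
  have hle : ∀ k ∈ univ, x k ≤ y k := fun k _ =>
    (hx.1 k).eq_or_lt.elim (fun h0 => h0 ▸ hy.1 k) fun hpos => (h k hpos).le
  have heq := (sum_eq_sum_iff_of_le hle).1 (hx.2.trans hy.2.symm)
  obtain ⟨k, -, hk⟩ := exists_ne_zero_of_sum_ne_zero (hx.2.trans_ne one_ne_zero)
  exact (h k ((hx.1 k).lt_of_ne' hk)).ne (heq k (mem_univ k))

theorem eq_of_forall_apply_le_of_mem_stdSimplex {ι : Type*} [Fintype ι] {x y : ι → ℝ}
    (hx : x ∈ stdSimplex ℝ ι) (hy : y ∈ stdSimplex ℝ ι) (h : ∀ k, y k ≤ x k) : y = x :=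
  funext fun k => (sum_eq_sum_iff_of_le fun k _ => h k).1 (hy.2.trans hx.2.symm) k (mem_univ k)

-- the vertex `(i, j)` of the triangulation of mesh `1 / n`, in barycentric coordinates
noncomputable def gridPoint (n i j : ℕ) : Fin 3 → ℝ := ![((n : ℝ) - i - j) / n, i / n, j / n]

theorem gridPoint_mem_stdSimplex {n i j : ℕ} (hn : 0 < n) (h : i + j ≤ n) :
    gridPoint n i j ∈ stdSimplex ℝ (Fin 3) := by
  have hn' : (0 : ℝ) < n := by exact_mod_cast hn
  have h' : (i : ℝ) + j ≤ n := by exact_mod_cast h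
  refine ⟨fun k => ?_, ?_⟩
  · fin_cases k
    · exact div_nonneg (by simp; linarith) hn'.le
    all_goals simp [gridPoint]; positivity
  · simp only [gridPoint, Fin.sum_univ_three, Matrix.cons_val]
    rw [← add_div, ← add_div, div_eq_one_iff_eq hn'.ne']
    ring

theorem dist_gridPoint_le {n i j i' j' : ℕ} (hi : i ≤ i' + 1) (hi' : i' ≤ i + 1)
    (hj : j ≤ j' + 1) (hj' : j' ≤ j + 1) : dist (gridPoint n i j) (gridPoint n i' j') ≤ 2 / n := by
  have hcoord : ∀ a b : ℝ, |a - b| ≤ 2 → |a / n - b / n| ≤ 2 / n := fun a b h => by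
    rw [← sub_div, abs_div, Nat.abs_cast]
    exact div_le_div_of_nonneg_right h n.cast_nonneg
  refine (dist_pi_le_iff (by positivity)).2 fun k => ?_
  rw [Real.dist_eq]
  have hi : (i : ℝ) ≤ i' + 1 := by exact_mod_cast hi
  have hi' : (i' : ℝ) ≤ i + 1 := by exact_mod_cast hi'
  have hj : (j : ℝ) ≤ j' + 1 := by exact_mod_cast hj
  have hj' : (j' : ℝ) ≤ j + 1 := by exact_mod_cast hj'
  fin_cases k <;> simp only [gridPoint] <;> simp <;>
    exact hcoord _ _ (abs_le.2 ⟨by linarith, by linarith⟩)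

theorem exists_approx_fixed_point {f : (Fin 3 → ℝ) → Fin 3 → ℝ}
    (hf : Set.MapsTo f (stdSimplex ℝ (Fin 3)) (stdSimplex ℝ (Fin 3))) {n : ℕ} (hn : 0 < n) :
    ∃ q : Fin 3 → Fin 3 → ℝ, ∀ k,
      q k ∈ stdSimplex ℝ (Fin 3) ∧ f (q k) k ≤ q k k ∧ dist (q 0) (q k) ≤ 2 / n := by
  have hlabel : ∀ i j, ∃ k : Fin 3, i + j ≤ n →
      0 < gridPoint n i j k ∧ f (gridPoint n i j) k ≤ gridPoint n i j k := fun i j => by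
    by_cases h : i + j ≤ n
    · obtain ⟨k, hk⟩ := exists_pos_apply_le_of_mem_stdSimplex (gridPoint_mem_stdSimplex hn h)
        (hf (gridPoint_mem_stdSimplex hn h))
      exact ⟨k, fun _ => hk⟩
    · exact ⟨0, fun h' => absurd h' h⟩
  choose l hl using hlabel
  obtain ⟨p, hp⟩ := Sperner.exists_fully_labelled_cell (n := n) (l := l)
    (fun i hi h2 => by simpa [h2, gridPoint] using (hl i 0 (by omega)).1)
    (fun j hj h1 => by simpa [h1, gridPoint] using (hl 0 j (by omega)).1)
    (fun i j hij h0 => by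
      have hij' : (i : ℝ) + j = n := by exact_mod_cast hij
      have := (hl i j hij.le).1
      simp [h0, gridPoint, ← hij'] at this)
  refine ⟨fun k => gridPoint n (p k).1 (p k).2,
    fun k => ⟨gridPoint_mem_stdSimplex hn (hp k).2.1, ?_, ?_⟩⟩
  · simpa only [(hp k).1] using (hl _ _ (hp k).2.1).2
  · exact dist_gridPoint_le ((hp 0).2.2 k).1 ((hp k).2.2 0).1 ((hp 0).2.2 k).2 ((hp k).2.2 0).2

theorem exists_fixed_point_of_mapsTo_stdSimplex {f : (Fin 3 → ℝ) → Fin 3 → ℝ}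
    (hf : ContinuousOn f (stdSimplex ℝ (Fin 3)))
    (hmaps : Set.MapsTo f (stdSimplex ℝ (Fin 3)) (stdSimplex ℝ (Fin 3))) :
    ∃ x ∈ stdSimplex ℝ (Fin 3), f x = x := by
  choose q hq using fun n : ℕ => exists_approx_fixed_point hmaps n.succ_pos
  obtain ⟨x, hx, φ, hφ, hlim⟩ := (isCompact_stdSimplex ℝ (Fin 3)).tendsto_subseq fun n => (hq n 0).1
  have hmesh : Tendsto (fun s => 2 / ((φ s + 1 : ℕ) : ℝ)) atTop (𝓝 0) :=
    ((tendsto_const_div_atTop_nhds_zero_nat 2).comp (tendsto_add_atTop_nat 1)).comp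
      hφ.tendsto_atTop
  have hlimk : ∀ k, Tendsto (fun s => q (φ s) k) atTop (𝓝 x) := fun k =>
    hlim.congr_dist (squeeze_zero (fun _ => dist_nonneg) (fun s => (hq (φ s) k).2.2) hmesh)
  refine ⟨x, hx, eq_of_forall_apply_le_of_mem_stdSimplex hx (hmaps hx) fun k => ?_⟩
  have hfk : Tendsto (fun s => f (q (φ s) k)) atTop (𝓝 (f x)) :=
    (hf x hx).tendsto.comp (tendsto_nhdsWithin_iff.2 ⟨hlimk k, .of_forall fun s => (hq _ k).1⟩)
  exact le_of_tendsto_of_tendsto' ((continuous_apply k).tendsto _ |>.comp hfk)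
    ((continuous_apply k).tendsto _ |>.comp (hlimk k)) fun s => (hq _ k).2.1

theorem exists_fixed_point_of_norm_le {F : (Fin 2 → ℝ) → Fin 2 → ℝ} (hF : Continuous F) {K : ℝ}
    (hK : ∀ v, ‖F v‖ ≤ K) : ∃ v, F v = v := by
  have hK₀ : 0 ≤ K := (norm_nonneg _).trans (hK 0)
  set s := 2 * K + 1 with hs
  have hs₀ : 0 < s := by positivity
  -- barycentric coordinates with respect to the triangle `(-s, -s)`, `(2s, -s)`, `(-s, 2s)`,
  -- which contains the square `[-K, K]²`
  let coords : (Fin 2 → ℝ) → Fin 3 → ℝ := fun w =>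
    ![(s - w 0 - w 1) / (3 * s), (w 0 + s) / (3 * s), (w 1 + s) / (3 * s)]
  let embed : (Fin 3 → ℝ) → Fin 2 → ℝ := fun x => ![3 * s * x 1 - s, 3 * s * x 2 - s]
  have hembed : ∀ w, embed (coords w) = w := fun w => by
    ext i; fin_cases i <;> simp [embed, coords] <;> field_simp <;> ring
  have hcoords : ∀ v, coords (F v) ∈ stdSimplex ℝ (Fin 3) := fun v => by
    have hFv : ∀ i, |F v i| ≤ K := fun i => (norm_le_pi_norm (F v) i).trans (hK v)
    have h₀ := abs_le.1 (hFv 0)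
    have h₁ := abs_le.1 (hFv 1)
    refine ⟨fun k => ?_, ?_⟩
    · fin_cases k <;> simp [coords] <;> apply div_nonneg <;> linarith
    · simp only [coords, Fin.sum_univ_three]
      simp
      field_simp
      ring
  have hcont : Continuous fun x => coords (F (embed x)) := by
    simp only [coords, embed]
    fun_prop
  obtain ⟨x, -, hx⟩ := exists_fixed_point_of_mapsTo_stdSimplex hcont.continuousOn
    fun x _ => hcoords (embed x)
  exact ⟨embed x, by rw [← hembed (F (embed x)), hx]⟩

end Brouwer

section Trajectory

variable {E : Type*}

def trajectory (F : ℕ → E → E) (v : E) : ℕ → E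
  | 0 => v
  | t + 1 => F t (trajectory F v t)

@[simp]
theorem trajectory_zero (F : ℕ → E → E) (v : E) : trajectory F v 0 = v := rfl

theorem trajectory_succ (F : ℕ → E → E) (v : E) (t : ℕ) :
    trajectory F v (t + 1) = F t (trajectory F v t) := rfl

theorem trajectory_add_period {F : ℕ → E → E} {N : ℕ} (hF : ∀ t, F (t + N) = F t) {v : E}
    (hv : trajectory F v N = v) (t : ℕ) : trajectory F v (t + N) = trajectory F v t := by
  induction t with
  | zero => simpa using hv
  | succ t ih => rw [Nat.add_right_comm, trajectory_succ, trajectory_succ, ih, hF]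

theorem continuous_trajectory [TopologicalSpace E] {F : ℕ → E → E} (hF : ∀ t, Continuous (F t))
    (t : ℕ) : Continuous fun v => trajectory F v t := by
  induction t with
  | zero => exact continuous_id
  | succ t ih => exact (hF t).comp ih

end Trajectory

section LinearSystem

variable {m K : Type*} [Fintype m] [DecidableEq m] [Field K]

theorem isUnit_of_mulVec_eq_zero {B : Matrix m m K} (hB : ∀ v, B *ᵥ v = 0 → v = 0) : IsUnit B :=
  mulVec_injective_iff_isUnit.1 fun u w huw =>
    sub_eq_zero.1 (hB _ (by rw [mulVec_sub, huw, sub_self]))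

theorem eq_pow_mulVec_of_succ {A : Matrix m m K} {z : ℕ → m → K}
    (hz : ∀ t, z (t + 1) = A *ᵥ z t) (t : ℕ) : z t = (A ^ t) *ᵥ z 0 := by
  induction t with
  | zero => simp
  | succ t ih => rw [hz, ih, mulVec_mulVec, pow_succ']

theorem eq_of_periodic_sub_mulVec_eq {A : Matrix m m K} {N : ℕ}
    (hA : ∀ v, (1 - A ^ N) *ᵥ v = 0 → v = 0) {h x x' : ℕ → m → K}
    (hx : ∀ t, x (t + N) = x t) (hx' : ∀ t, x' (t + N) = x' t)
    (hxh : ∀ t, x (t + 1) - A *ᵥ x t = h t) (hx'h : ∀ t, x' (t + 1) - A *ᵥ x' t = h t) :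
    x = x' := by
  have hz : ∀ t, (x - x') (t + 1) = A *ᵥ (x - x') t := fun t => by
    rw [Pi.sub_apply, Pi.sub_apply, mulVec_sub]
    linear_combination (norm := module) hxh t - hx'h t
  have hz₀ : (x - x') 0 = 0 := hA _ <| by
    rw [sub_mulVec, one_mulVec, ← eq_pow_mulVec_of_succ hz, Pi.sub_apply, Pi.sub_apply,
      ← zero_add N, hx, hx', sub_self]
  funext t
  simpa [hz₀, sub_eq_zero] using eq_pow_mulVec_of_succ hz t

theorem exists_periodic_sub_mulVec_eq {A : Matrix m m K} {N : ℕ}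
    (hA : ∀ v, (1 - A ^ N) *ᵥ v = 0 → v = 0) {h : ℕ → m → K} (hh : ∀ t, h (t + N) = h t) :
    ∃ x : ℕ → m → K, (∀ t, x (t + N) = x t) ∧ ∀ t, x (t + 1) - A *ᵥ x t = h t := by
  set F : ℕ → (m → K) → m → K := fun t u => A *ᵥ u + h t
  have haffine : ∀ v, trajectory F v N = A ^ N *ᵥ v + trajectory F 0 N := fun v => by
    have := eq_pow_mulVec_of_succ (A := A) (z := trajectory F v - trajectory F 0)
      (fun t => by simp only [Pi.sub_apply, trajectory_succ, F, mulVec_sub]; abel) N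
    simpa [sub_eq_iff_eq_add', add_comm] using this
  obtain ⟨v, hv⟩ :=
    mulVec_surjective_iff_isUnit.2 (isUnit_of_mulVec_eq_zero hA) (trajectory F 0 N)
  have hret : trajectory F v N = v := by
    rw [haffine, ← hv, sub_mulVec, one_mulVec]
    abel
  exact ⟨trajectory F v, trajectory_add_period (fun t => by simp only [F, hh]) hret,
    fun t => add_sub_cancel_left _ _⟩

theorem exists_norm_mulVec_le (A : Matrix m m ℝ) : ∃ a, 0 ≤ a ∧ ∀ u, ‖A *ᵥ u‖ ≤ a * ‖u‖ :=
  ⟨_, norm_nonneg _, (LinearMap.toContinuousLinearMap (Matrix.toLin' A)).le_opNorm⟩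

theorem exists_norm_trajectory_sub_le (A : Matrix m m ℝ) {H : ℕ → (m → ℝ) → m → ℝ} {δ : ℝ}
    (hH : ∀ t u, ‖H t u‖ ≤ δ) (t : ℕ) :
    ∃ K, ∀ v, ‖trajectory (fun t u => A *ᵥ u + H t u) v t - (A ^ t) *ᵥ v‖ ≤ K := by
  obtain ⟨a, ha₀, ha⟩ := exists_norm_mulVec_le A
  induction t with
  | zero => exact ⟨0, fun v => by simp⟩
  | succ t ih =>
    obtain ⟨K, hK⟩ := ih
    refine ⟨a * K + δ, fun v => ?_⟩
    set x := trajectory (fun t u => A *ᵥ u + H t u) v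
    calc ‖x (t + 1) - A ^ (t + 1) *ᵥ v‖ = ‖A *ᵥ (x t - A ^ t *ᵥ v) + H t (x t)‖ := by
          rw [mulVec_sub, mulVec_mulVec, ← pow_succ']
          simp only [x, trajectory_succ]
          abel_nf
      _ ≤ a * K + δ := (norm_add_le _ _).trans
          (add_le_add ((ha _).trans (mul_le_mul_of_nonneg_left (hK v) ha₀)) (hH _ _))

end LinearSystem

theorem exists_periodic_trajectory {A : Matrix (Fin 2) (Fin 2) ℝ} {N : ℕ}
    (hA : ∀ v, (1 - A ^ N) *ᵥ v = 0 → v = 0) {H : ℕ → (Fin 2 → ℝ) → Fin 2 → ℝ}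
    (hcont : ∀ t, Continuous (H t)) {δ : ℝ} (hbdd : ∀ t u, ‖H t u‖ ≤ δ)
    (hper : ∀ t, H (t + N) = H t) :
    ∃ x : ℕ → Fin 2 → ℝ, (∀ t, x (t + N) = x t) ∧ ∀ t, x (t + 1) = A *ᵥ x t + H t (x t) := by
  set F : ℕ → (Fin 2 → ℝ) → Fin 2 → ℝ := fun t u => A *ᵥ u + H t u
  obtain ⟨B, hB⟩ := (isUnit_of_mulVec_eq_zero hA).exists_right_inv
  obtain ⟨K, hK⟩ := exists_norm_trajectory_sub_le A hbdd N
  obtain ⟨a, ha₀, ha⟩ := exists_norm_mulVec_le B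
  -- a fixed point `v` of `Φ` satisfies `(1 - A ^ N) v = trajectory F v N - A ^ N v`
  let Φ : (Fin 2 → ℝ) → Fin 2 → ℝ := fun v => B *ᵥ (trajectory F v N - A ^ N *ᵥ v)
  have hΦ : Continuous Φ := by
    have := continuous_trajectory (F := F) (fun t => by fun_prop) N
    fun_prop
  obtain ⟨v, hv⟩ := exists_fixed_point_of_norm_le hΦ
    fun v => (ha _).trans (mul_le_mul_of_nonneg_left (hK v) ha₀)
  have hret : trajectory F v N = v := by
    have := congrArg ((1 - A ^ N) *ᵥ ·) hv
    simp only [Φ, mulVec_mulVec, hB, one_mulVec, sub_mulVec] at this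
    exact sub_left_inj.1 this
  exact ⟨trajectory F v, trajectory_add_period (fun t => by simp only [F, hper]) hret,
    fun t => rfl⟩

theorem abs_le_euclNorm2 (v : Fin 2 → ℝ) : |v 0| ≤ euclNorm2 v :=
  Real.abs_le_sqrt (le_add_of_nonneg_right (sq_nonneg _))

theorem euclNorm2_vecCons_zero (a : ℝ) : euclNorm2 ![0, a] = |a| := by
  simp [euclNorm2, Real.sqrt_sq_eq_abs]

theorem supNorm_nonneg (x : ℕ → Fin 2 → ℝ) : 0 ≤ supNorm x :=
  Real.iSup_nonneg fun _ => Real.sqrt_nonneg _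

theorem euclNorm2_le_supNorm_of_periodic {N : ℕ} (hN : 0 < N) {x : ℕ → Fin 2 → ℝ}
    (hx : ∀ t, x (t + N) = x t) (t : ℕ) : euclNorm2 (x t) ≤ supNorm x := by
  refine le_ciSup (f := fun t => euclNorm2 (x t))
    (((Set.finite_Iio N).image fun t => euclNorm2 (x t)).bddAbove.mono ?_) t
  rintro _ ⟨s, rfl⟩
  exact ⟨s % N, Nat.mod_lt s hN, congrArg euclNorm2 (Function.Periodic.map_mod_nat hx s)⟩

theorem euclNorm2_le_of_periodic_solution {A : Matrix (Fin 2) (Fin 2) ℝ} {N : ℕ} (hN : 0 < N)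
    (hA : ∀ v, (1 - A ^ N) *ᵥ v = 0 → v = 0) {Li : (ℕ → Fin 2 → ℝ) → ℕ → Fin 2 → ℝ}
    (hLi : ∀ h : ℕ → Fin 2 → ℝ, (∀ t, h (t + N) = h t) →
      (∀ t, Li h (t + N) = Li h t) ∧ ∀ t, Li h (t + 1) - A *ᵥ Li h t = h t)
    {C δ r : ℝ} (hLinorm : ∀ h, (∀ t, h (t + N) = h t) → supNorm (Li h) ≤ C * supNorm h)
    (hr : 0 < r) (hCr : C * δ < r) {h x : ℕ → Fin 2 → ℝ} (hh : ∀ t, h (t + N) = h t)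
    (hhδ : ∀ t, euclNorm2 (h t) ≤ δ) (hx : ∀ t, x (t + N) = x t)
    (hxh : ∀ t, x (t + 1) - A *ᵥ x t = h t) (t : ℕ) : euclNorm2 (x t) ≤ r := by
  obtain ⟨hLiper, hLih⟩ := hLi h hh
  have hxLi : x = Li h := eq_of_periodic_sub_mulVec_eq hA hx hLiper hxh hLih
  have hxC : supNorm x ≤ C * supNorm h := hxLi ▸ hLinorm h hh
  have hhδ : supNorm h ≤ δ := ciSup_le hhδ
  have hh₀ := supNorm_nonneg h
  refine (euclNorm2_le_supNorm_of_periodic hN hx t).trans (hxC.trans ?_)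
  rcases le_total 0 C with hC | hC <;> nlinarith

theorem companion_mulVec (b c : ℝ) (u : Fin 2 → ℝ) :
    !![0, 1; -c, -b] *ᵥ u = ![u 1, -c * u 0 - b * u 1] := by
  ext i
  fin_cases i <;> simp [mulVec, dotProduct, Fin.sum_univ_two]
  ring

theorem nonresonant_existence_general
    (N : ℕ) (hN : 1 < N) (b c : ℝ)
    (A : Matrix (Fin 2) (Fin 2) ℝ) (hA : A = !![0, 1; -c, -b])
    (htriv : ∀ v : Fin 2 → ℝ, (1 - A ^ N) *ᵥ v = 0 → v = 0) :
    (∀ h : ℕ → Fin 2 → ℝ, (∀ t : ℕ, h (t + N) = h t) →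
      ∃! x : ℕ → Fin 2 → ℝ, (∀ t : ℕ, x (t + N) = x t) ∧
        ∀ t : ℕ, x (t + 1) - A *ᵥ x t = h t) ∧
    ∀ (g : ℕ → ℝ → ℝ), (∀ t : ℕ, Continuous (g t)) →
      (∀ (t : ℕ) (x : ℝ), g (t + N) x = g t x) →
    ∀ (r δ : ℝ), 0 < r → 0 < δ →
      (∀ (t : ℕ) (x : ℝ), x ∈ Set.Icc (-(2 * r)) (2 * r) → |g t x| ≤ δ) →
      ∀ (Li : (ℕ → Fin 2 → ℝ) → (ℕ → Fin 2 → ℝ)) (C : ℝ),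
        (∀ h : ℕ → Fin 2 → ℝ, (∀ t : ℕ, h (t + N) = h t) →
          (∀ t : ℕ, Li h (t + N) = Li h t) ∧
          ∀ t : ℕ, Li h (t + 1) - A *ᵥ Li h t = h t) →
        (∀ h : ℕ → Fin 2 → ℝ, (∀ t : ℕ, h (t + N) = h t) →
          supNorm (Li h) ≤ C * supNorm h) →
        C * δ < r →
        ∃ y : ℕ → ℝ, (∀ t : ℕ, y (t + N) = y t) ∧
          (∀ t : ℕ, y (t + 2) + b * y (t + 1) + c * y t = g t (y t)) ∧
          ∀ t : ℕ, euclNorm2 ![y t, y (t + 1)] ≤ r := by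
  refine ⟨fun h hh => ?_, ?_⟩
  · obtain ⟨x, hx, hxh⟩ := exists_periodic_sub_mulVec_eq htriv hh
    exact ⟨x, ⟨hx, hxh⟩, fun x' hx' => eq_of_periodic_sub_mulVec_eq htriv hx'.1 hx hx'.2 hxh⟩
  intro g hg hgper r δ hr hδ hgδ Li C hLi hLinorm hCr
  let G : ℕ → ℝ → ℝ := fun t y => g t (Set.projIcc (-(2 * r)) (2 * r) (by linarith) y)
  have hGδ : ∀ t y, |G t y| ≤ δ := fun t y => hgδ t _ (Subtype.prop _)
  obtain ⟨x, hx, hxrec⟩ := exists_periodic_trajectory htriv (H := fun t u => ![0, G t (u 0)])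
    (fun t => by fun_prop)
    (fun t u => (pi_norm_le_iff_of_nonneg hδ.le).2 fun i => by fin_cases i <;> simp [hδ.le, hGδ])
    (fun t => by funext u; simp [G, hgper])
  subst hA
  have hshift : ∀ t, x (t + 1) 0 = x t 1 := fun t => by rw [hxrec, companion_mulVec]; simp
  have hrec : ∀ t, x (t + 1) 1 = -c * x t 0 - b * x t 1 + G t (x t 0) := fun t => by
    rw [hxrec, companion_mulVec]; simp
  have hxr : ∀ t, euclNorm2 (x t) ≤ r :=
    euclNorm2_le_of_periodic_solution (by omega) htriv hLi hLinorm hr hCr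
      (h := fun t => ![0, G t (x t 0)]) (fun t => by simp [hx, G, hgper])
      (fun t => by rw [euclNorm2_vecCons_zero]; exact hGδ _ _) hx
      (fun t => by rw [hxrec]; exact add_sub_cancel_left _ _)
  have hG : ∀ t, G t (x t 0) = g t (x t 0) := fun t => by
    have := abs_le.1 ((abs_le_euclNorm2 (x t)).trans (hxr t))
    simp only [G]
    rw [Set.projIcc_of_mem _ ⟨by linarith, by linarith⟩]
  refine ⟨fun t => x t 0, fun t => congrFun (hx t) 0, fun t => ?_, fun t => ?_⟩
  · simp only [hshift, hrec, hG]
    ring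
  · have hxt : ![x t 0, x (t + 1) 0] = x t := by ext i; fin_cases i <;> simp [hshift]
    rw [hxt]
    exact hxr t

/-- If `Ker(I − A^N) = {0}` then `𝓛 : X_N → X_N` is bijective; moreover, if
`g` is continuous in `x`, `N`-periodic in `t`, `|g(t,x)| ≤ δ` on `[−2r, 2r]`, and
`‖𝓛⁻¹‖·δ < r` (expressed via the inverse `Li` of `𝓛` on `X_N` and any bound `C` for its
operator norm), then the difference equation has an `N`-periodic solution `y` with
`sup_t |(y(t), y(t+1))| ≤ r`. -/
theorem nonresonant_existence
    (N : ℕ) (hN : 1 < N) (b c : ℝ) (hc : c ≠ 0)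
    (A : Matrix (Fin 2) (Fin 2) ℝ) (hA : A = !![0, 1; -c, -b])
    (htriv : ∀ v : Fin 2 → ℝ, (1 - A ^ N) *ᵥ v = 0 → v = 0) :
    (∀ h : ℕ → Fin 2 → ℝ, (∀ t : ℕ, h (t + N) = h t) →
      ∃! x : ℕ → Fin 2 → ℝ, (∀ t : ℕ, x (t + N) = x t) ∧
        ∀ t : ℕ, x (t + 1) - A *ᵥ x t = h t) ∧
    ∀ (g : ℕ → ℝ → ℝ), (∀ t : ℕ, Continuous (g t)) →
      (∀ (t : ℕ) (x : ℝ), g (t + N) x = g t x) →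
    ∀ (r δ : ℝ), 0 < r → 0 < δ →
      (∀ (t : ℕ) (x : ℝ), x ∈ Set.Icc (-(2 * r)) (2 * r) → |g t x| ≤ δ) →
      ∀ (Li : (ℕ → Fin 2 → ℝ) → (ℕ → Fin 2 → ℝ)) (C : ℝ),
        (∀ h : ℕ → Fin 2 → ℝ, (∀ t : ℕ, h (t + N) = h t) →
          (∀ t : ℕ, Li h (t + N) = Li h t) ∧
          ∀ t : ℕ, Li h (t + 1) - A *ᵥ Li h t = h t) →
        (∀ h : ℕ → Fin 2 → ℝ, (∀ t : ℕ, h (t + N) = h t) →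
          supNorm (Li h) ≤ C * supNorm h) →
        C * δ < r →
        ∃ y : ℕ → ℝ, (∀ t : ℕ, y (t + N) = y t) ∧
          (∀ t : ℕ, y (t + 2) + b * y (t + 1) + c * y t = g t (y t)) ∧
          ∀ t : ℕ, euclNorm2 ![y t, y (t + 1)] ≤ r :=
  nonresonant_existence_general N hN b c A hA htriv
end

section
/- Define k : ℝ → ℝ by k(x) = −1/ln(−x) for x ≤ −e, k(x) = x/e for −e < x < e, and k(x) = 1/ln(x) for x ≥ e, and let M₁, M₂ > 0 and 0 < β < 1 be constants. Define h : ℝ → ℝ by h(x) = k(x)·x + M₁|x|^β + M₂. Then h is not sublinear: there do not exist constants D₁, D₂ ≥ 0 and γ with 0 ≤ γ < 1 such that |h(x)| ≤ D₁|x|^γ + D₂ for all x ∈ ℝ. -/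
/-!
For `x ≥ e` the term `k x * x` is `x / log x` and the other two summands of `h` are nonnegative,
so `h x ≥ x / log x`. Since `x ^ (1 - γ) / log x → ∞`, the function `x / log x` eventually
exceeds `D₁ * x ^ γ + D₂` for every `γ < 1`.
-/

open Real Filter

theorem tendsto_rpow_div_log_atTop {r : ℝ} (hr : 0 < r) :
    Tendsto (fun x => x ^ r / log x) atTop atTop := by
  refine ((tendsto_exp_mul_div_rpow_atTop 1 r hr).comp tendsto_log_atTop).congr' ?_
  filter_upwards [eventually_gt_atTop 0] with x hx
  simp [rpow_def_of_pos hx, mul_comm]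

theorem eventually_rpow_add_lt_div_log {γ : ℝ} (hγ0 : 0 ≤ γ) (hγ1 : γ < 1) (D₁ D₂ : ℝ) :
    ∀ᶠ x in atTop, D₁ * x ^ γ + D₂ < x / log x := by
  filter_upwards [(tendsto_rpow_div_log_atTop (sub_pos.2 hγ1)).eventually_gt_atTop (|D₁| + |D₂|),
    eventually_gt_atTop 1] with x hgrowth hx
  have hlog : 0 < log x := log_pos hx
  have hxγ : 1 ≤ x ^ γ := one_le_rpow hx.le hγ0
  have hsplit : x / log x = x ^ (1 - γ) / log x * x ^ γ := by
    rw [div_mul_eq_mul_div, ← rpow_add (by linarith), sub_add_cancel, rpow_one]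
  calc D₁ * x ^ γ + D₂ ≤ |D₁| * x ^ γ + |D₂| * x ^ γ := by
        gcongr
        · exact le_abs_self D₁
        · nlinarith [abs_nonneg D₂, le_abs_self D₂]
    _ = (|D₁| + |D₂|) * x ^ γ := by ring
    _ < x / log x := by rw [hsplit]; gcongr

theorem not_abs_le_rpow_add_of_div_log_le {f : ℝ → ℝ} (hf : ∀ᶠ x in atTop, x / log x ≤ f x)
    {γ : ℝ} (hγ0 : 0 ≤ γ) (hγ1 : γ < 1) (D₁ D₂ : ℝ) :
    ¬ ∀ x, |f x| ≤ D₁ * |x| ^ γ + D₂ := by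
  intro hbound
  obtain ⟨x, hfx, hlt, hx⟩ :=
    (hf.and ((eventually_rpow_add_lt_div_log hγ0 hγ1 D₁ D₂).and (eventually_gt_atTop 0))).exists
  have := hbound x
  rw [abs_of_pos hx] at this
  linarith [le_abs_self (f x)]

theorem concrete_h_not_sublinear_general
    (k h : ℝ → ℝ)
    (hk : ∀ x : ℝ, k x =
      if x ≤ -(Real.exp 1) then -1 / Real.log (-x)
      else if x < Real.exp 1 then x / Real.exp 1
      else 1 / Real.log x)
    (M₁ M₂ β : ℝ) (hM₁ : 0 < M₁) (hM₂ : 0 < M₂)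
    (hh : ∀ x : ℝ, h x = k x * x + M₁ * |x| ^ β + M₂) :
    ¬ ∃ D₁ D₂ γ : ℝ, 0 ≤ D₁ ∧ 0 ≤ D₂ ∧ 0 ≤ γ ∧ γ < 1 ∧
      ∀ x : ℝ, |h x| ≤ D₁ * |x| ^ γ + D₂ := by
  rintro ⟨D₁, D₂, γ, -, -, hγ0, hγ1, hbound⟩
  have hh_ge : ∀ᶠ x in atTop, x / log x ≤ h x := by
    filter_upwards [eventually_ge_atTop (exp 1)] with x hx
    have hkx : k x = 1 / log x := by
      rw [hk, if_neg (by linarith [exp_pos 1]), if_neg (not_lt.2 hx)]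
    rw [hh, hkx, one_div_mul_eq_div]
    have : 0 ≤ M₁ * |x| ^ β := by positivity
    linarith
  exact not_abs_le_rpow_add_of_div_log_le hh_ge hγ0 hγ1 D₁ D₂ hbound

/-- With `k(x) = −1/ln(−x)` for `x ≤ −e`, `k(x) = x/e` for `−e < x < e`,
`k(x) = 1/ln(x)` for `x ≥ e`, and `h(x) = k(x)·x + M₁|x|^β + M₂` (`M₁, M₂ > 0`,
`0 < β < 1`), the function `h` is not sublinear: there are no `D₁, D₂ ≥ 0` and
`0 ≤ γ < 1` with `|h(x)| ≤ D₁|x|^γ + D₂` for all `x`. -/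
theorem concrete_h_not_sublinear
    (k h : ℝ → ℝ)
    (hk : ∀ x : ℝ, k x =
      if x ≤ -(Real.exp 1) then -1 / Real.log (-x)
      else if x < Real.exp 1 then x / Real.exp 1
      else 1 / Real.log x)
    (M₁ M₂ β : ℝ) (hM₁ : 0 < M₁) (hM₂ : 0 < M₂) (hβ0 : 0 < β) (hβ1 : β < 1)
    (hh : ∀ x : ℝ, h x = k x * x + M₁ * |x| ^ β + M₂) :
    ¬ ∃ D₁ D₂ γ : ℝ, 0 ≤ D₁ ∧ 0 ≤ D₂ ∧ 0 ≤ γ ∧ γ < 1 ∧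
      ∀ x : ℝ, |h x| ≤ D₁ * |x| ^ γ + D₂ :=
  concrete_h_not_sublinear_general k h hk M₁ M₂ β hM₁ hM₂ hh
end
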